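/- arXiv:2502.16512 — 4 statements merged into one kernel-verified Lean document; each statement's English description precedes it below -/
import Mathlib

section
/- Let E be a nonempty finite index set and let (L_e)_{e∈E} be a family of positive real numbers that is linearly independent over ℚ. For each e ∈ E let (γ_{e,ℓ})_{ℓ∈ℕ} be a sequence of real numbers such that γ_{e,ℓ} converges to some γ_e in the extended real line [−∞,∞] and γ_{e,ℓ}/ℓ → 0 as ℓ → ∞, and let ε : E → {−1,+1} be any sign choice. Then there exists a sequence (λ_ℓ)_{ℓ∈ℕ} in (0,∞) with λ_ℓ → ∞ such that for every e ∈ E one has ℓ·sin(√(λ_ℓ)·L_e) → γ_e in [−∞,∞], cos(√(λ_ℓ)·L_e) → 1 as ℓ → ∞, and in addition ε(e)·sin(√(λ_ℓ)·L_e) > 0 for all ℓ ∈ ℕ whenever γ_e = 0. -/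
/-!
For `m` large, `∏ₑ cosKernel m (t Lₑ - θₑ)` is at most `(1 - δ/2) ^ m` at every `t` where some
`cos (t Lₑ - θₑ) ≤ 1 - δ`, while its mean over `[T₀, T]` tends to its constant Fourier coefficient
`(C(2m, m) / 4 ^ m) ^ |E| ≥ (2m + 1) ^ (-|E|)`: by ℚ-linear independence no other frequency
vanishes, so the remaining terms have bounded integrals. Hence the bad times cannot cover
`[T₀, ∞)`, which is Kronecker's theorem: `t Lₑ` approaches any targets `θₑ` modulo `2π`
simultaneously, for arbitrarily large `t`.

With targets `arcsin (γ_{e,ℓ} / ℓ)` (or `arcsin (ε_e / (ℓ + 1) ^ 2)` when `γ_e = 0`) and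
`t_ℓ ≥ ℓ + 1` bringing `sin` and `cos` of `t_ℓ L_e` within `1 / (ℓ + 1) ^ 2` of those of the
targets, `λ_ℓ = t_ℓ ^ 2` gives `ℓ sin (√λ_ℓ L_e) = γ_{e,ℓ} + o(1)`.
-/

open Filter Topology

noncomputable def cosKernel (m : ℕ) (x : ℝ) : ℝ := ((1 + Real.cos x) / 2) ^ m

theorem continuous_cosKernel (m : ℕ) : Continuous (cosKernel m) := by
  unfold cosKernel; fun_prop

theorem cosKernel_nonneg (m : ℕ) (x : ℝ) : 0 ≤ cosKernel m x :=
  pow_nonneg (by linarith [Real.neg_one_le_cos x]) m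

theorem cosKernel_le_one (m : ℕ) (x : ℝ) : cosKernel m x ≤ 1 :=
  pow_le_one₀ (by linarith [Real.neg_one_le_cos x]) (by linarith [Real.cos_le_one x])

theorem cosKernel_le_of_cos_le {x δ : ℝ} (h : Real.cos x ≤ 1 - δ) (m : ℕ) :
    cosKernel m x ≤ (1 - δ / 2) ^ m :=
  pow_le_pow_left₀ (by linarith [Real.neg_one_le_cos x]) (by linarith) m

theorem prod_cosKernel_le_of_cos_le {E : Type*} [Fintype E] {x : E → ℝ} {δ : ℝ} {e₀ : E}
    (h : Real.cos (x e₀) ≤ 1 - δ) (m : ℕ) : ∏ e, cosKernel m (x e) ≤ (1 - δ / 2) ^ m := by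
  classical
  rw [← Finset.mul_prod_erase _ _ (Finset.mem_univ e₀)]
  calc _ ≤ cosKernel m (x e₀) * 1 :=
        mul_le_mul_of_nonneg_left (Finset.prod_le_one (fun e _ => cosKernel_nonneg m (x e))
          fun e _ => cosKernel_le_one m (x e)) (cosKernel_nonneg m (x e₀))
    _ ≤ (1 - δ / 2) ^ m := by rw [mul_one]; exact cosKernel_le_of_cos_le h m

section Fourier

open Complex

theorem ofReal_cosKernel (m : ℕ) (x : ℝ) :
    (cosKernel m x : ℂ) = ∑ j ∈ Finset.range (2 * m + 1),
      ((2 * m).choose j / 4 ^ m : ℂ) * exp ((((j : ℝ) - m) * x : ℝ) * I) := by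
  have hinv : exp (-(x * I)) * exp (x * I) = 1 := by rw [← exp_add]; simp
  have hbase : (((1 + Real.cos x) / 2 : ℝ) : ℂ) = exp (-(x * I)) * (exp (x * I) + 1) ^ 2 / 4 := by
    have : ((Real.cos x : ℝ) : ℂ) = (exp (x * I) + exp (-(x * I))) / 2 := by
      rw [ofReal_cos, cos]; ring_nf
    push_cast [this]
    linear_combination (-(2 + exp (x * I)) / 4) * hinv
  rw [cosKernel, ofReal_pow, hbase, div_pow, mul_pow, ← pow_mul, add_pow, Finset.mul_sum,
    Finset.sum_div]
  refine Finset.sum_congr rfl fun j _ => ?_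
  rw [one_pow, mul_one, ← exp_nat_mul, ← exp_nat_mul,
    show ((((j : ℝ) - m) * x : ℝ) : ℂ) * I = m * -(x * I) + j * (x * I) by push_cast; ring, exp_add]
  ring

theorem ofReal_prod_cosKernel {E : Type*} [Fintype E] [DecidableEq E] (m : ℕ) (x : E → ℝ) :
    ((∏ e, cosKernel m (x e) : ℝ) : ℂ) =
      ∑ J ∈ Fintype.piFinset fun _ => Finset.range (2 * m + 1),
        (∏ e, ((2 * m).choose (J e) / 4 ^ m : ℂ)) *
          exp (((∑ e, ((J e : ℝ) - m) * x e : ℝ) : ℂ) * I) := by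
  simp_rw [ofReal_prod, ofReal_cosKernel, Finset.prod_univ_sum, Finset.prod_mul_distrib,
    ← exp_sum, ofReal_sum, Finset.sum_mul]

theorem norm_integral_exp_le {a : ℝ} (ha : a ≠ 0) (b T₀ T : ℝ) :
    ‖∫ s in T₀..T, exp (((a * s - b : ℝ) : ℂ) * I)‖ ≤ 2 / |a| := by
  have hrw : ∀ s : ℝ, exp (((a * s - b : ℝ) : ℂ) * I) = exp (-b * I) * exp (a * I * s) := by
    intro s; rw [← exp_add]; push_cast; ring_nf
  have haI : (a : ℂ) * I ≠ 0 := mul_ne_zero (ofReal_ne_zero.mpr ha) I_ne_zero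
  have hunit : ∀ s : ℝ, ‖exp (a * I * s)‖ = 1 := fun s => by
    rw [show (a : ℂ) * I * s = ((a * s : ℝ) : ℂ) * I by push_cast; ring, norm_exp_ofReal_mul_I]
  simp_rw [hrw]
  rw [intervalIntegral.integral_const_mul, integral_exp_mul_complex haI, norm_mul, norm_div,
    show -(b : ℂ) * I = ((-b : ℝ) : ℂ) * I by push_cast; ring, norm_exp_ofReal_mul_I, one_mul,
    norm_mul, norm_I, mul_one, norm_real, Real.norm_eq_abs]
  gcongr
  calc _ ≤ ‖exp (a * I * T)‖ + ‖exp (a * I * T₀)‖ := norm_sub_le _ _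
    _ = 2 := by rw [hunit, hunit]; norm_num

theorem exists_norm_integral_sum_exp_le {ι : Type*} (S : Finset ι) (c : ι → ℂ)
    {ω : ι → ℝ} (hω : ∀ i ∈ S, ω i ≠ 0) (β : ι → ℝ) (T₀ : ℝ) :
    ∃ K, ∀ T, ‖∫ s in T₀..T, ∑ i ∈ S, c i * exp (((ω i * s - β i : ℝ) : ℂ) * I)‖ ≤ K := by
  refine ⟨∑ i ∈ S, ‖c i‖ * (2 / |ω i|), fun T => ?_⟩
  rw [intervalIntegral.integral_finsetSum fun i _ =>
    (Continuous.intervalIntegrable (by fun_prop) _ _)]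
  refine (norm_sum_le _ _).trans (Finset.sum_le_sum fun i hi => ?_)
  rw [intervalIntegral.integral_const_mul, norm_mul]
  exact mul_le_mul_of_nonneg_left (norm_integral_exp_le (hω i hi) _ _ _) (norm_nonneg _)

theorem LinearIndependent.eq_of_sum_natCast_sub_mul_eq_zero {E : Type*} [Fintype E]
    {L : E → ℝ} (hL : LinearIndependent ℚ L) {J : E → ℕ} {m : ℕ}
    (h : ∑ e, ((J e : ℝ) - m) * L e = 0) : J = fun _ => m := by
  have hcoeff := Fintype.linearIndependent_iff.mp (hL.restrict_scalars' ℤ)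
    (fun e => (J e : ℤ) - m) (by simpa [zsmul_eq_mul] using h)
  funext e
  have := hcoeff e
  omega

theorem exists_integral_prod_cosKernel_ge {E : Type*} [Fintype E] {L : E → ℝ}
    (hL : LinearIndependent ℚ L) (θ : E → ℝ) (m : ℕ) (T₀ : ℝ) :
    ∃ K, ∀ T, (T - T₀) * ((2 * m).choose m / 4 ^ m : ℝ) ^ Fintype.card E - K ≤
      ∫ s in T₀..T, ∏ e, cosKernel m (s * L e - θ e) := by
  classical
  set S := Fintype.piFinset fun _ : E => Finset.range (2 * m + 1)
  set J₀ : E → ℕ := fun _ => m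
  set ω : (E → ℕ) → ℝ := fun J => ∑ e, ((J e : ℝ) - m) * L e
  set β : (E → ℕ) → ℝ := fun J => ∑ e, ((J e : ℝ) - m) * θ e
  set c : (E → ℕ) → ℂ := fun J => ∏ e, ((2 * m).choose (J e) / 4 ^ m : ℂ)
  have hω : ∀ J ∈ S.erase J₀, ω J ≠ 0 := fun J hJ h =>
    (Finset.mem_erase.mp hJ).1 (hL.eq_of_sum_natCast_sub_mul_eq_zero h)
  obtain ⟨K, hK⟩ := exists_norm_integral_sum_exp_le (S.erase J₀) c hω β T₀
  refine ⟨K, fun T => ?_⟩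
  have hJ₀ : J₀ ∈ S := Fintype.mem_piFinset.mpr fun _ =>
    Finset.mem_range.mpr (by simp only [J₀]; omega)
  have hexp : ∀ s : ℝ, ((∏ e, cosKernel m (s * L e - θ e) : ℝ) : ℂ) =
      (((2 * m).choose m / 4 ^ m : ℝ) ^ Fintype.card E : ℝ) +
        ∑ J ∈ S.erase J₀, c J * exp (((ω J * s - β J : ℝ) : ℂ) * I) := by
    intro s
    rw [ofReal_prod_cosKernel, ← Finset.add_sum_erase _ _ hJ₀]
    congr 1
    · simp [J₀, div_pow]
    · refine Finset.sum_congr rfl fun J _ => ?_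
      congr 4
      simp only [ω, β, Finset.sum_mul, ← Finset.sum_sub_distrib]
      exact Finset.sum_congr rfl fun e _ => by ring
  have hdiff : ((∫ s in T₀..T, ∏ e, cosKernel m (s * L e - θ e) : ℝ) : ℂ) -
      ((T - T₀) * ((2 * m).choose m / 4 ^ m : ℝ) ^ Fintype.card E : ℝ) =
      ∫ s in T₀..T, ∑ J ∈ S.erase J₀, c J * exp (((ω J * s - β J : ℝ) : ℂ) * I) := by
    rw [← intervalIntegral.integral_ofReal, intervalIntegral.integral_congr fun s _ => hexp s,
      intervalIntegral.integral_add intervalIntegrable_const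
        (Continuous.intervalIntegrable (by fun_prop) _ _),
      intervalIntegral.integral_const, real_smul, ofReal_mul, add_sub_cancel_left]
  rw [← ofReal_sub] at hdiff
  have := (abs_le.mp ((norm_real _).symm.trans_le (hdiff ▸ hK T))).1
  linarith

end Fourier

theorem exists_two_mul_add_one_pow_mul_pow_lt_one (n : ℕ) {r : ℝ} (hr₀ : 0 ≤ r) (hr₁ : r < 1) :
    ∃ m : ℕ, (2 * m + 1 : ℝ) ^ n * r ^ m < 1 := by
  have hlim : Tendsto (fun m : ℕ => 3 ^ n * ((m : ℝ) ^ n * r ^ m)) atTop (𝓝 0) := by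
    simpa using (tendsto_pow_const_mul_const_pow_of_lt_one n hr₀ hr₁).const_mul (3 ^ n)
  obtain ⟨m, hlt, hm⟩ :=
    ((hlim.eventually (gt_mem_nhds one_pos)).and (eventually_ge_atTop 1)).exists
  refine ⟨m, lt_of_le_of_lt ?_ hlt⟩
  have hm' : (1 : ℝ) ≤ m := by exact_mod_cast hm
  calc (2 * m + 1 : ℝ) ^ n * r ^ m ≤ (3 * m) ^ n * r ^ m := by gcongr; linarith
    _ = 3 ^ n * ((m : ℝ) ^ n * r ^ m) := by ring

theorem exists_ge_forall_one_sub_lt_cos {E : Type*} [Fintype E] {L : E → ℝ}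
    (hL : LinearIndependent ℚ L) (θ : E → ℝ) {δ : ℝ} (hδ : 0 < δ) (T₀ : ℝ) :
    ∃ t ≥ T₀, ∀ e, 1 - δ < Real.cos (t * L e - θ e) := by
  wlog hδ₁ : δ ≤ 1 generalizing δ
  · obtain ⟨t, ht, h⟩ := this one_pos le_rfl
    exact ⟨t, ht, fun e => by linarith [h e]⟩
  set n := Fintype.card E
  obtain ⟨m, hm⟩ := exists_two_mul_add_one_pow_mul_pow_lt_one n (r := 1 - δ / 2)
    (by linarith) (by linarith)
  set r := 1 - δ / 2
  set a : ℝ := (2 * m).choose m / 4 ^ m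
  have hgap : r ^ m < a ^ n := by
    have ha : 1 / (2 * m + 1) ≤ a := by
      rw [div_le_div_iff₀ (by positivity) (by positivity), one_mul, mul_comm]
      exact_mod_cast Nat.four_pow_le_two_mul_add_one_mul_central_binom m
    calc r ^ m < 1 / (2 * m + 1) ^ n := by rw [lt_div_iff₀ (by positivity)]; linarith
      _ = (1 / (2 * m + 1)) ^ n := by rw [div_pow, one_pow]
      _ ≤ a ^ n := pow_le_pow_left₀ (by positivity) ha n
  obtain ⟨K, hK⟩ := exists_integral_prod_cosKernel_ge hL θ m T₀
  have hK₀ : 0 ≤ K := by simpa using hK T₀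
  by_contra! hbad
  have hupper : ∀ T ≥ T₀,
      ∫ s in T₀..T, ∏ e, cosKernel m (s * L e - θ e) ≤ (T - T₀) * r ^ m := by
    intro T hT
    refine (intervalIntegral.integral_mono_on (g := fun _ => r ^ m) hT
      (Continuous.intervalIntegrable (continuous_finsetProd _ fun e _ =>
        (continuous_cosKernel m).comp (by fun_prop)) _ _)
      intervalIntegrable_const fun s hs => ?_).trans_eq (by simp)
    obtain ⟨e, he⟩ := hbad s hs.1
    exact prod_cosKernel_le_of_cos_le (x := fun e => s * L e - θ e) he m
  set T := T₀ + (K + 1) / (a ^ n - r ^ m)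
  have hT : (T - T₀) * (a ^ n - r ^ m) = K + 1 := by
    simp only [T, add_sub_cancel_left]
    exact div_mul_cancel₀ _ (by linarith)
  have hT₀ : T₀ ≤ T := le_add_of_nonneg_right (div_nonneg (by linarith) (by linarith))
  have := (hK T).trans (hupper T hT₀)
  nlinarith

theorem abs_sin_sub_sin_lt_of_one_sub_lt_cos {a b η : ℝ} (hη : 0 ≤ η)
    (h : 1 - η ^ 2 / 2 < Real.cos (a - b)) :
    |Real.sin a - Real.sin b| < η ∧ |Real.cos a - Real.cos b| < η := by
  set d := (a - b) / 2
  have hd : |2 * Real.sin d| < η := by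
    have : Real.cos (a - b) = 1 - 2 * Real.sin d ^ 2 := by
      rw [show a - b = 2 * d by ring, Real.cos_two_mul, Real.cos_sq']; ring
    exact abs_lt_of_sq_lt_sq (by nlinarith) hη
  rw [Real.sin_sub_sin, Real.cos_sub_cos]
  constructor
  · calc |2 * Real.sin d * Real.cos ((a + b) / 2)|
        = |2 * Real.sin d| * |Real.cos ((a + b) / 2)| := abs_mul _ _
      _ ≤ |2 * Real.sin d| * 1 := by gcongr; exact Real.abs_cos_le_one _
      _ < η := by rwa [mul_one]
  · calc |-2 * Real.sin ((a + b) / 2) * Real.sin d|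
        = |Real.sin ((a + b) / 2)| * |2 * Real.sin d| := by
          rw [show -2 * Real.sin ((a + b) / 2) * Real.sin d
            = -(Real.sin ((a + b) / 2) * (2 * Real.sin d)) by ring, abs_neg, abs_mul]
      _ ≤ 1 * |2 * Real.sin d| := by gcongr; exact Real.abs_sin_le_one _
      _ < η := by rwa [one_mul]

theorem exists_ge_forall_abs_sin_sub_lt {E : Type*} [Fintype E] {L : E → ℝ}
    (hL : LinearIndependent ℚ L) (θ : E → ℝ) {η : ℝ} (hη : 0 < η) (T₀ : ℝ) :
    ∃ t ≥ T₀, ∀ e, |Real.sin (t * L e) - Real.sin (θ e)| < η ∧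
      |Real.cos (t * L e) - Real.cos (θ e)| < η :=
  let ⟨t, ht, h⟩ := exists_ge_forall_one_sub_lt_cos hL θ (δ := η ^ 2 / 2) (by positivity) T₀
  ⟨t, ht, fun e => abs_sin_sub_sin_lt_of_one_sub_lt_cos hη.le (h e)⟩

theorem EReal.tendsto_coe_add_of_tendsto_zero {α : Type*} {l : Filter α} {f g : α → ℝ}
    {x : EReal} (hf : Tendsto (fun a => (f a : EReal)) l (𝓝 x)) (hg : Tendsto g l (𝓝 0)) :
    Tendsto (fun a => ((f a + g a : ℝ) : EReal)) l (𝓝 x) := by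
  have hg' := EReal.tendsto_coe.mpr hg
  rw [EReal.coe_zero] at hg'
  simp only [EReal.coe_add]
  have := (EReal.continuousAt_add (p := (x, 0)) (.inr (by simp)) (.inr (by simp))).tendsto.comp
    (hf.prodMk_nhds hg')
  simpa [Function.comp_def] using this

theorem tendsto_natCast_mul_sin {x s u : ℕ → ℝ} {γ : EReal} (hs : Tendsto s atTop (𝓝 0))
    (hu : Tendsto (fun ℓ : ℕ => (ℓ : ℝ) * u ℓ) atTop (𝓝 0))
    (hx : ∀ ℓ, |Real.sin (x ℓ) - Real.sin (Real.arcsin (s ℓ))| < u ℓ)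
    (hsγ : Tendsto (fun ℓ : ℕ => (((ℓ : ℝ) * s ℓ : ℝ) : EReal)) atTop (𝓝 γ)) :
    Tendsto (fun ℓ : ℕ => (((ℓ : ℝ) * Real.sin (x ℓ) : ℝ) : EReal)) atTop (𝓝 γ) := by
  have herr : Tendsto (fun ℓ : ℕ => (ℓ : ℝ) * (Real.sin (x ℓ) - Real.sin (Real.arcsin (s ℓ))))
      atTop (𝓝 0) := by
    refine squeeze_zero_norm (fun ℓ => ?_) hu
    rw [norm_mul, Real.norm_natCast, Real.norm_eq_abs]
    exact mul_le_mul_of_nonneg_left (hx ℓ).le (Nat.cast_nonneg _)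
  have hsin : ∀ᶠ ℓ in atTop, Real.sin (Real.arcsin (s ℓ)) = s ℓ := by
    filter_upwards [hs.eventually (Icc_mem_nhds (by norm_num : (-1 : ℝ) < 0) one_pos)] with ℓ h
    exact Real.sin_arcsin h.1 h.2
  refine (EReal.tendsto_coe_add_of_tendsto_zero hsγ herr).congr' ?_
  filter_upwards [hsin] with ℓ h
  rw [h]
  ring_nf

theorem tendsto_cos_of_abs_cos_sub_lt {α : Type*} {l : Filter α} {x θ u : α → ℝ}
    (hθ : Tendsto θ l (𝓝 0)) (hu : Tendsto u l (𝓝 0))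
    (hx : ∀ a, |Real.cos (x a) - Real.cos (θ a)| < u a) :
    Tendsto (fun a => Real.cos (x a)) l (𝓝 1) := by
  have hcos : Tendsto (fun a => Real.cos (θ a)) l (𝓝 1) := by
    simpa [Function.comp_def] using (Real.continuous_cos.tendsto 0).comp hθ
  refine hcos.congr_dist (squeeze_zero (fun _ => dist_nonneg) (fun a => ?_) hu)
  rw [Real.dist_eq, abs_sub_comm]
  exact (hx a).le

theorem pos_mul_sin_of_abs_sin_sub_lt {x u ε : ℝ} (hε : ε = 1 ∨ ε = -1) (hu : u ≤ 1)
    (h : |Real.sin x - Real.sin (Real.arcsin (ε * u))| < u) : 0 < ε * Real.sin x := by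
  have hu₀ : 0 < u := (abs_nonneg _).trans_lt h
  rcases hε with rfl | rfl
  · rw [one_mul, Real.sin_arcsin (by linarith) hu] at h
    linarith [(abs_lt.mp h).1]
  · rw [neg_one_mul, Real.sin_arcsin (by linarith) (by linarith)] at h
    linarith [(abs_lt.mp h).2]

theorem tendsto_natCast_mul_one_div_add_one_sq :
    Tendsto (fun ℓ : ℕ => (ℓ : ℝ) * (1 / ((ℓ : ℝ) + 1)) ^ 2) atTop (𝓝 0) := by
  have : Tendsto (fun ℓ : ℕ => (ℓ : ℝ) / (ℓ + 1) * (1 / ((ℓ : ℝ) + 1))) atTop (𝓝 (1 * 0)) :=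
    (tendsto_natCast_div_add_atTop (1 : ℝ)).mul tendsto_one_div_add_atTop_nhds_zero_nat
  rw [mul_zero] at this
  exact this.congr fun ℓ => by ring

/-- When `γlim = 0` the target ignores `γ`, whose sign need not be that of `ε`. -/
noncomputable def sinTarget (γlim : EReal) (ε : ℝ) (γ u : ℕ → ℝ) (ℓ : ℕ) : ℝ :=
  if γlim = 0 then ε * u ℓ else γ ℓ / ℓ

theorem tendsto_sinTarget {γlim : EReal} (ε : ℝ) {γ u : ℕ → ℝ}
    (hγdiv : Tendsto (fun ℓ : ℕ => γ ℓ / ℓ) atTop (𝓝 0)) (hu : Tendsto u atTop (𝓝 0)) :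
    Tendsto (sinTarget γlim ε γ u) atTop (𝓝 0) := by
  by_cases h : γlim = 0
  · rw [← mul_zero ε]
    exact (hu.const_mul ε).congr fun ℓ => (if_pos h).symm
  · exact hγdiv.congr fun ℓ => (if_neg h).symm

theorem tendsto_natCast_mul_sinTarget {γlim : EReal} (ε : ℝ) {γ u : ℕ → ℝ}
    (hγ : Tendsto (fun ℓ => (γ ℓ : EReal)) atTop (𝓝 γlim))
    (hu : Tendsto (fun ℓ : ℕ => (ℓ : ℝ) * u ℓ) atTop (𝓝 0)) :
    Tendsto (fun ℓ : ℕ => (((ℓ : ℝ) * sinTarget γlim ε γ u ℓ : ℝ) : EReal)) atTop (𝓝 γlim) := by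
  by_cases h : γlim = 0
  · rw [h, ← EReal.coe_zero, EReal.tendsto_coe]
    simpa [sinTarget, h, mul_left_comm] using hu.const_mul ε
  · refine hγ.congr' ?_
    filter_upwards [eventually_ne_atTop 0] with ℓ hℓ
    rw [sinTarget, if_neg h, mul_div_cancel₀ _ (Nat.cast_ne_zero.mpr hℓ)]

theorem ergodic_lemma_with_signs_general {E : Type*} [Fintype E]
    (L : E → ℝ)
    (hindep : LinearIndependent ℚ L)
    (γ : E → ℕ → ℝ) (γlim : E → EReal)
    (hγ : ∀ e, Tendsto (fun ℓ : ℕ => ((γ e ℓ : ℝ) : EReal)) atTop (nhds (γlim e)))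
    (hγdiv : ∀ e, Tendsto (fun ℓ : ℕ => γ e ℓ / (ℓ : ℝ)) atTop (nhds 0))
    (ε : E → ℝ) (hε : ∀ e, ε e = 1 ∨ ε e = -1) :
    ∃ lam : ℕ → ℝ, (∀ ℓ, 0 < lam ℓ) ∧ Tendsto lam atTop atTop ∧
      (∀ e, Tendsto (fun ℓ : ℕ => (((ℓ : ℝ) * Real.sin (Real.sqrt (lam ℓ) * L e) : ℝ) : EReal))
            atTop (nhds (γlim e)) ∧
        Tendsto (fun ℓ : ℕ => Real.cos (Real.sqrt (lam ℓ) * L e)) atTop (nhds 1)) ∧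
      (∀ e, γlim e = 0 → ∀ ℓ : ℕ, 0 < ε e * Real.sin (Real.sqrt (lam ℓ) * L e)) := by
  set u : ℕ → ℝ := fun ℓ => (1 / ((ℓ : ℝ) + 1)) ^ 2
  have hu_pos : ∀ ℓ, 0 < u ℓ := fun ℓ => by positivity
  have hu_le : ∀ ℓ, u ℓ ≤ 1 := fun ℓ =>
    pow_le_one₀ (by positivity) (div_le_one_of_le₀ (by simp) (by positivity))
  have hu : Tendsto u atTop (𝓝 0) := by
    have := (tendsto_one_div_add_atTop_nhds_zero_nat (𝕜 := ℝ)).pow 2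
    rwa [zero_pow two_ne_zero] at this
  set s : E → ℕ → ℝ := fun e => sinTarget (γlim e) (ε e) (γ e) u
  choose t ht hclose using fun ℓ : ℕ =>
    exists_ge_forall_abs_sin_sub_lt hindep (fun e => Real.arcsin (s e ℓ)) (hu_pos ℓ) ((ℓ : ℝ) + 1)
  have ht_pos : ∀ ℓ, 0 < t ℓ := fun ℓ => lt_of_lt_of_le (by positivity) (ht ℓ)
  have hsqrt : ∀ ℓ, Real.sqrt (t ℓ ^ 2) = t ℓ := fun ℓ => Real.sqrt_sq (ht_pos ℓ).le
  have hs : ∀ e, Tendsto (s e) atTop (𝓝 0) := fun e => tendsto_sinTarget (ε e) (hγdiv e) hu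
  refine ⟨fun ℓ => t ℓ ^ 2, fun ℓ => pow_pos (ht_pos ℓ) 2, ?_, fun e => ⟨?_, ?_⟩, ?_⟩
  · refine tendsto_atTop_mono (fun ℓ => ?_) tendsto_natCast_atTop_atTop
    nlinarith [ht ℓ]
  · simp only [hsqrt]
    exact tendsto_natCast_mul_sin (hs e) tendsto_natCast_mul_one_div_add_one_sq
      (fun ℓ => (hclose ℓ e).1)
      (tendsto_natCast_mul_sinTarget (ε e) (hγ e) tendsto_natCast_mul_one_div_add_one_sq)
  · simp only [hsqrt]
    refine tendsto_cos_of_abs_cos_sub_lt ?_ hu fun ℓ => (hclose ℓ e).2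
    simpa [Function.comp_def] using (Real.continuous_arcsin.tendsto 0).comp (hs e)
  · intro e he ℓ
    have := (hclose ℓ e).1
    rw [show s e ℓ = ε e * u ℓ from if_pos he] at this
    simpa only [hsqrt] using pos_mul_sin_of_abs_sin_sub_lt (hε e) (hu_le ℓ) this

/-- As Statement 0, and additionally any sign choice `ε : E → {−1,+1}` can be
prescribed so that whenever `γlim e = 0` one has `ε e · sin(√λ_ℓ·L_e) > 0` for all `ℓ`. -/
theorem ergodic_lemma_with_signs {E : Type*} [Fintype E] [Nonempty E]
    (L : E → ℝ) (hLpos : ∀ e, 0 < L e)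
    (hindep : LinearIndependent ℚ L)
    (γ : E → ℕ → ℝ) (γlim : E → EReal)
    (hγ : ∀ e, Tendsto (fun ℓ : ℕ => ((γ e ℓ : ℝ) : EReal)) atTop (nhds (γlim e)))
    (hγdiv : ∀ e, Tendsto (fun ℓ : ℕ => γ e ℓ / (ℓ : ℝ)) atTop (nhds 0))
    (ε : E → ℝ) (hε : ∀ e, ε e = 1 ∨ ε e = -1) :
    ∃ lam : ℕ → ℝ, (∀ ℓ, 0 < lam ℓ) ∧ Tendsto lam atTop atTop ∧
      (∀ e, Tendsto (fun ℓ : ℕ => (((ℓ : ℝ) * Real.sin (Real.sqrt (lam ℓ) * L e) : ℝ) : EReal))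
            atTop (nhds (γlim e)) ∧
        Tendsto (fun ℓ : ℕ => Real.cos (Real.sqrt (lam ℓ) * L e)) atTop (nhds 1)) ∧
      (∀ e, γlim e = 0 → ∀ ℓ : ℕ, 0 < ε e * Real.sin (Real.sqrt (lam ℓ) * L e)) :=
  ergodic_lemma_with_signs_general L hindep γ γlim hγ hγdiv ε hε
end

section
/- Assume the edge lengths (L_{kj})_{(k,j)∈E} are linearly independent over ℚ, and for each edge (k,j) ∈ E let γ_{kj} ∈ [−∞,∞] \ {0} with γ_{kj} = γ_{jk}. Then there exists a sequence (λ_ℓ)_{ℓ∈ℕ} in (0,∞) with λ_ℓ → ∞ such that sin(√(λ_ℓ)·L_{kj}) ≠ 0 for every edge (k,j) and every ℓ (so D_{λ_ℓ,V} is defined), and (1/(ℓ√(λ_ℓ)))·D_{λ_ℓ,V} converges entrywise as ℓ → ∞ to the symmetric matrix Q ∈ ℝ^{n×n} defined by Q_{kj} = Q_{jk} = −1/γ_{kj} if (k,j) ∈ E (with the convention 1/(±∞) = 0), Q_{kj} = 0 if k ≠ j and (k,j) ∉ E, and Q_{kk} = −Σ_{j≠k} Q_{kj}. Moreover, if γ_{kj}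 = 1 for all edges, then −Q = A_G − D_G, where A_G is the adjacency matrix of G and D_G is the diagonal matrix of vertex degrees (i.e., −Q is the graph Laplacian L_G = A_G − D_G). -/
open Filter Topology

/-- `β_{kj}(λ)` for an edge of length `L` (zero entries are handled in `DtN` itself). -/
noncomputable def betaFn (L lam : ℝ) : ℝ :=
  if 0 < lam then Real.sqrt lam / Real.sin (Real.sqrt lam * L)
  else if lam = 0 then 1 / L
  else Real.sqrt (-lam) / Real.sinh (Real.sqrt (-lam) * L)

/-- `α_{kj}(λ)` for an edge of length `L`. -/
noncomputable def alphaFn (L lam : ℝ) : ℝ :=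
  if 0 < lam then Real.sqrt lam * Real.cos (Real.sqrt lam * L) / Real.sin (Real.sqrt lam * L)
  else if lam = 0 then 1 / L
  else Real.sqrt (-lam) * Real.cosh (Real.sqrt (-lam) * L) / Real.sinh (Real.sqrt (-lam) * L)

/-- The Dirichlet-to-Neumann matrix `D_{λ,V}` of a quantum graph with adjacency `G` and edge
lengths `L`: off-diagonal entries `−β_{kj}(λ)` on edges (`0` off edges), diagonal entries
`Σ_l α_{kl}(λ)` (where `α_{kl} = 0` unless `(k,l)` is an edge). -/
noncomputable def DtN {V : Type*} [Fintype V] [DecidableEq V]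
    (G : SimpleGraph V) [DecidableRel G.Adj] (L : V → V → ℝ) (lam : ℝ) :
    Matrix V V ℝ := fun k j =>
  if k = j then ∑ l, (if G.Adj k l then alphaFn (L k l) lam else 0)
  else if G.Adj k j then -betaFn (L k j) lam else 0

/-- The limit matrix `Q` of Corollary: `Q_{kj} = −1/γ_{kj}` on edges (with `1/(±∞) = 0`),
`Q_{kj} = 0` off edges for `k ≠ j`, and `Q_{kk} = −Σ_{j≠k} Q_{kj}`. -/
noncomputable def Qmat {n : ℕ} (G : SimpleGraph (Fin n)) [DecidableRel G.Adj]
    (γ : Fin n → Fin n → EReal) : Matrix (Fin n) (Fin n) ℝ := fun k j =>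
  if k = j then ∑ l, (if G.Adj k l then ((γ k l).toReal)⁻¹ else 0)
  else if G.Adj k j then -((γ k j).toReal)⁻¹ else 0

/-!
Take `λ_ℓ = t_ℓ²` with `t_ℓ ≥ ℓ + 1` chosen so that, modulo `2π`, every `t_ℓ L_e` lies within
`o(1/ℓ)` of a target angle `φ_e(ℓ)` with `cos φ_e(ℓ) → 1` and `1/(ℓ sin φ_e(ℓ)) → c_e := 1/γ_e`.
Then the rescaled entries `β_e(λ_ℓ)/(ℓ t_ℓ) = 1/(ℓ sin(t_ℓ L_e))` and
`α_e(λ_ℓ)/(ℓ t_ℓ) = cos(t_ℓ L_e)/(ℓ sin(t_ℓ L_e))` both tend to `c_e`, which is `Q`.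

Such `t_ℓ` exist by Kronecker's theorem for the `ℚ`-linearly independent lengths. It is proved by
averaging the kernel `∏_e ((1 + cos(t L_e - θ_e))/2)^K` over `[0, T]`: the mean tends to the
constant Fourier coefficient `(C(2K, K)/4^K)^|E| ≥ (2K + 1)^(-|E|)`, since linear independence
leaves no other frequency equal to zero. If some coordinate stayed `δ`-far from its target for all
large `t`, the kernel would eventually be at most `(1 - δ/2)^K`, which is smaller for large `K`.
-/

open MeasureTheory

section Kronecker

open Complex

theorem tendsto_average_cexp_mul_I (σ : ℝ) :
    Tendsto (fun T : ℝ => (T : ℂ)⁻¹ * ∫ t in (0 : ℝ)..T, cexp (σ * t * I)) atTop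
      (𝓝 (if σ = 0 then 1 else 0)) := by
  split_ifs with hσ
  · refine tendsto_const_nhds.congr' ?_
    filter_upwards [eventually_ne_atTop 0] with T hT
    simp [hσ, hT]
  · have hc : (σ : ℂ) * I ≠ 0 := mul_ne_zero (ofReal_ne_zero.mpr hσ) I_ne_zero
    have hbound (T : ℝ) : ‖∫ t in (0 : ℝ)..T, cexp (σ * t * I)‖ ≤ 2 / ‖(σ : ℂ) * I‖ := by
      simp_rw [mul_right_comm _ _ I, integral_exp_mul_complex hc, norm_div]
      refine div_le_div_of_nonneg_right ((norm_sub_le _ _).trans_eq ?_) (norm_nonneg _)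
      rw [mul_right_comm, mul_right_comm _ I, ← ofReal_mul, ← ofReal_mul,
        norm_exp_ofReal_mul_I, norm_exp_ofReal_mul_I]
      norm_num
    rw [tendsto_zero_iff_norm_tendsto_zero]
    have hlim : Tendsto (fun T : ℝ => |T|⁻¹ * (2 / ‖(σ : ℂ) * I‖)) atTop (𝓝 0) := by
      simpa using (tendsto_inv_atTop_zero.comp tendsto_abs_atTop_atTop).mul_const
        (2 / ‖(σ : ℂ) * I‖)
    refine squeeze_zero (fun _ => norm_nonneg _) (fun T => ?_) hlim
    rw [norm_mul, norm_inv, norm_real, Real.norm_eq_abs]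
    exact mul_le_mul_of_nonneg_left (hbound T) (by positivity)

theorem tendsto_average_sum_cexp_mul_I {α : Type*} (s : Finset α) (c : α → ℂ) (σ : α → ℝ) :
    Tendsto (fun T : ℝ => (T : ℂ)⁻¹ * ∫ t in (0 : ℝ)..T, ∑ p ∈ s, c p * cexp (σ p * t * I))
      atTop (𝓝 (∑ p ∈ s, if σ p = 0 then c p else 0)) := by
  have hint (p : α) (T : ℝ) :
      IntervalIntegrable (fun t : ℝ => c p * cexp (σ p * t * I)) volume 0 T :=
    (by fun_prop : Continuous fun t : ℝ => c p * cexp (σ p * t * I)).intervalIntegrable _ _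
  have hsum (T : ℝ) : (T : ℂ)⁻¹ * ∫ t in (0 : ℝ)..T, ∑ p ∈ s, c p * cexp (σ p * t * I) =
      ∑ p ∈ s, c p * ((T : ℂ)⁻¹ * ∫ t in (0 : ℝ)..T, cexp (σ p * t * I)) := by
    rw [intervalIntegral.integral_finsetSum fun p _ => hint p T, Finset.mul_sum]
    refine Finset.sum_congr rfl fun p _ => ?_
    rw [intervalIntegral.integral_const_mul]
    ring
  simp_rw [hsum]
  refine tendsto_finsetSum s fun p _ => ?_
  simpa using (tendsto_average_cexp_mul_I (σ p)).const_mul (c p)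

theorem le_of_tendsto_average {f : ℝ → ℝ} {a b B T₀ : ℝ} (hf : Continuous f)
    (hB : ∀ t, f t ≤ B) (hb : ∀ t, T₀ ≤ t → f t ≤ b)
    (ha : Tendsto (fun T : ℝ => T⁻¹ * ∫ t in (0 : ℝ)..T, f t) atTop (𝓝 a)) : a ≤ b := by
  set T₁ := max T₀ 0
  have hbound : ∀ᶠ T in atTop, T⁻¹ * ∫ t in (0 : ℝ)..T, f t ≤ b + T⁻¹ * (T₁ * (B - b)) := by
    filter_upwards [eventually_gt_atTop T₁] with T hT₁T
    have hT : 0 < T := (le_max_right T₀ 0).trans_lt hT₁T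
    have hhead : ∫ t in (0 : ℝ)..T₁, f t ≤ T₁ * B := by
      simpa using intervalIntegral.integral_mono_on (le_max_right T₀ 0)
        (hf.intervalIntegrable 0 T₁) (intervalIntegrable_const (μ := volume)) fun t _ => hB t
    have htail : ∫ t in T₁..T, f t ≤ (T - T₁) * b := by
      simpa using intervalIntegral.integral_mono_on hT₁T.le (hf.intervalIntegrable _ _)
        (intervalIntegrable_const (μ := volume)) fun t ht => hb t ((le_max_left T₀ 0).trans ht.1)
    rw [← intervalIntegral.integral_add_adjacent_intervals (hf.intervalIntegrable 0 T₁)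
      (hf.intervalIntegrable T₁ T)]
    calc T⁻¹ * ((∫ t in (0 : ℝ)..T₁, f t) + ∫ t in T₁..T, f t)
        ≤ T⁻¹ * (T₁ * B + (T - T₁) * b) := by gcongr
      _ = b + T⁻¹ * (T₁ * (B - b)) := by field_simp; ring
  have hlim : Tendsto (fun T : ℝ => b + T⁻¹ * (T₁ * (B - b))) atTop (𝓝 b) := by
    simpa using tendsto_const_nhds.add (tendsto_inv_atTop_zero.mul_const (T₁ * (B - b)))
  exact le_of_tendsto_of_tendsto ha hlim hbound

theorem inv_two_mul_add_one_le_centralBinom_div (K : ℕ) :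
    (2 * K + 1 : ℝ)⁻¹ ≤ (2 * K).choose K / 4 ^ K := by
  rw [inv_le_iff_one_le_mul₀ (by positivity), div_mul_eq_mul_div, le_div_iff₀ (by positivity),
    one_mul, mul_comm]
  exact_mod_cast Nat.four_pow_le_two_mul_add_one_mul_central_binom K

theorem exists_pow_lt_centralBinom_div_pow {r : ℝ} (hr₀ : 0 ≤ r) (hr₁ : r < 1) (m : ℕ) :
    ∃ K : ℕ, r ^ K < (((2 * K).choose K / 4 ^ K : ℝ)) ^ m := by
  have hlim : Tendsto (fun K : ℕ => 3 ^ m * ((K : ℝ) ^ m * r ^ K)) atTop (𝓝 0) := by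
    simpa using (tendsto_pow_const_mul_const_pow_of_lt_one m hr₀ hr₁).const_mul ((3 : ℝ) ^ m)
  obtain ⟨K, hK, hsmall⟩ := ((eventually_ge_atTop 1).and (hlim.eventually_lt_const one_pos)).exists
  refine ⟨K, lt_of_lt_of_le ?_ (pow_le_pow_left₀ (by positivity)
    (inv_two_mul_add_one_le_centralBinom_div K) m)⟩
  have hK' : (1 : ℝ) ≤ K := by exact_mod_cast hK
  have hpoly : (2 * K + 1 : ℝ) ^ m ≤ 3 ^ m * (K : ℝ) ^ m := by
    rw [← mul_pow]; exact pow_le_pow_left₀ (by positivity) (by linarith) m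
  rw [inv_pow, inv_eq_one_div, lt_div_iff₀ (by positivity)]
  calc r ^ K * (2 * K + 1 : ℝ) ^ m ≤ r ^ K * (3 ^ m * (K : ℝ) ^ m) := by gcongr
    _ = 3 ^ m * ((K : ℝ) ^ m * r ^ K) := by ring
    _ < 1 := hsmall

theorem ofReal_one_add_cos_div_two_pow (K : ℕ) (x : ℝ) :
    ((((1 + Real.cos x) / 2) ^ K : ℝ) : ℂ) =
      ∑ j ∈ Finset.range (2 * K + 1),
        ((2 * K).choose j : ℂ) / 4 ^ K * cexp (↑(((j : ℝ) - K) * x) * I) := by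
  have hhalf : (1 + Real.cos x) / 2 = Real.cos (x / 2) ^ 2 := by
    rw [Real.cos_sq, mul_div_cancel₀ x two_ne_zero]; ring
  have hcos : Complex.cos (x / 2) = (cexp (x / 2 * I) + cexp (-(x / 2) * I)) / 2 := by
    rw [Complex.cos]
  rw [hhalf, ← pow_mul, ofReal_pow, ofReal_cos, ofReal_div, ofReal_ofNat, hcos, div_pow,
    add_pow, Finset.sum_div]
  refine Finset.sum_congr rfl fun j hj => ?_
  have hj : j ≤ 2 * K := Nat.lt_succ_iff.mp (Finset.mem_range.mp hj)
  rw [← exp_nat_mul, ← exp_nat_mul, ← exp_add, pow_mul, show (2 : ℂ) ^ 2 = 4 by norm_num,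
    Nat.cast_sub hj]
  push_cast
  ring_nf

variable {ι : Type*} [Fintype ι]

noncomputable def kroneckerKernel (L θ : ι → ℝ) (K : ℕ) (t : ℝ) : ℝ :=
  ∏ i, ((1 + Real.cos (t * L i - θ i)) / 2) ^ K

theorem ofReal_kroneckerKernel [DecidableEq ι] (L θ : ι → ℝ) (K : ℕ) (t : ℝ) :
    (kroneckerKernel L θ K t : ℂ) =
      ∑ p ∈ Fintype.piFinset fun _ : ι => Finset.range (2 * K + 1),
        (∏ i, ((2 * K).choose (p i) : ℂ) / 4 ^ K * cexp (-↑(((p i : ℝ) - K) * θ i) * I)) *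
          cexp (↑(∑ i, ((p i : ℝ) - K) * L i) * t * I) := by
  simp_rw [kroneckerKernel, ofReal_prod, ofReal_one_add_cos_div_two_pow, Finset.prod_univ_sum]
  refine Finset.sum_congr rfl fun p _ => ?_
  rw [ofReal_sum, Finset.sum_mul, Finset.sum_mul, exp_sum, ← Finset.prod_mul_distrib]
  refine Finset.prod_congr rfl fun i _ => ?_
  rw [mul_assoc, ← exp_add]
  push_cast
  ring_nf

theorem tendsto_average_kroneckerKernel {L : ι → ℝ} (hL : LinearIndependent ℚ L) (θ : ι → ℝ)
    (K : ℕ) :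
    Tendsto (fun T : ℝ => T⁻¹ * ∫ t in (0 : ℝ)..T, kroneckerKernel L θ K t) atTop
      (𝓝 (((2 * K).choose K / 4 ^ K : ℝ) ^ Fintype.card ι)) := by
  classical
  have hfreq (p : ι → ℕ) (hp : ∑ i, ((p i : ℝ) - K) * L i = 0) : p = fun _ => K := by
    have h := Fintype.linearIndependent_iff.mp hL (fun i => (p i : ℚ) - K)
      (by simpa [Rat.smul_def, mul_comm] using hp)
    funext i
    exact_mod_cast sub_eq_zero.mp (h i)
  have hK : (fun _ : ι => K) ∈ Fintype.piFinset fun _ : ι => Finset.range (2 * K + 1) :=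
    Fintype.mem_piFinset.mpr fun _ => Finset.mem_range.mpr (by omega)
  rw [← tendsto_ofReal_iff]
  have h := tendsto_average_sum_cexp_mul_I (Fintype.piFinset fun _ : ι => Finset.range (2 * K + 1))
    (fun p => ∏ i, ((2 * K).choose (p i) : ℂ) / 4 ^ K * cexp (-↑(((p i : ℝ) - K) * θ i) * I))
    (fun p => ∑ i, ((p i : ℝ) - K) * L i)
  rw [Finset.sum_eq_single_of_mem _ hK fun p _ hp => if_neg fun h0 => hp (hfreq p h0)] at h
  convert h using 2 with T
  · simp_rw [← ofReal_kroneckerKernel, intervalIntegral.integral_ofReal]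
    push_cast
    rfl
  · simp [div_pow]

theorem one_add_cos_div_two_pow_mem_Icc (K : ℕ) (x : ℝ) :
    ((1 + Real.cos x) / 2) ^ K ∈ Set.Icc (0 : ℝ) 1 :=
  ⟨pow_nonneg (by linarith [Real.neg_one_le_cos x]) K,
    pow_le_one₀ (by linarith [Real.neg_one_le_cos x]) (by linarith [Real.cos_le_one x])⟩

theorem continuous_kroneckerKernel (L θ : ι → ℝ) (K : ℕ) : Continuous (kroneckerKernel L θ K) := by
  unfold kroneckerKernel; fun_prop

theorem kroneckerKernel_le_one (L θ : ι → ℝ) (K : ℕ) (t : ℝ) : kroneckerKernel L θ K t ≤ 1 :=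
  Finset.prod_le_one (fun _ _ => (one_add_cos_div_two_pow_mem_Icc K _).1)
    fun _ _ => (one_add_cos_div_two_pow_mem_Icc K _).2

theorem kroneckerKernel_le_of_cos_le (L θ : ι → ℝ) (K : ℕ) {t δ : ℝ} {i : ι}
    (hi : Real.cos (t * L i - θ i) ≤ 1 - δ) : kroneckerKernel L θ K t ≤ (1 - δ / 2) ^ K := by
  classical
  calc kroneckerKernel L θ K t ≤ ∏ j, if j = i then (1 - δ / 2) ^ K else 1 := by
        refine Finset.prod_le_prod (fun j _ => (one_add_cos_div_two_pow_mem_Icc K _).1)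
          fun j _ => ?_
        split_ifs with hj
        · subst hj
          exact pow_le_pow_left₀ (by linarith [Real.neg_one_le_cos (t * L j - θ j)])
            (by linarith) K
        · exact (one_add_cos_div_two_pow_mem_Icc K _).2
    _ = (1 - δ / 2) ^ K := by simp

theorem exists_forall_one_sub_lt_cos {L : ι → ℝ} (hL : LinearIndependent ℚ L) (θ : ι → ℝ)
    {δ : ℝ} (hδ : 0 < δ) (T₀ : ℝ) : ∃ t, T₀ ≤ t ∧ ∀ i, 1 - δ < Real.cos (t * L i - θ i) := by
  classical
  set δ' := min δ 1
  obtain ⟨K, hK⟩ := exists_pow_lt_centralBinom_div_pow (r := 1 - δ' / 2)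
    (by linarith [min_le_right δ 1]) (by linarith [lt_min hδ one_pos]) (Fintype.card ι)
  by_contra! hbad
  have hle := le_of_tendsto_average (T₀ := T₀) (b := (1 - δ' / 2) ^ K)
    (continuous_kroneckerKernel L θ K)
    (kroneckerKernel_le_one L θ K) (fun t ht => ?_) (tendsto_average_kroneckerKernel hL θ K)
  · exact (hK.trans_le hle).false
  · obtain ⟨i, hi⟩ := hbad t ht
    exact kroneckerKernel_le_of_cos_le L θ K (hi.trans (by linarith [min_le_left δ 1]))

end Kronecker

theorem sin_sub_sin_sq_add_cos_sub_cos_sq (x y : ℝ) :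
    (Real.sin x - Real.sin y) ^ 2 + (Real.cos x - Real.cos y) ^ 2 = 2 - 2 * Real.cos (x - y) := by
  rw [Real.cos_sub]
  linear_combination Real.sin_sq_add_cos_sq x + Real.sin_sq_add_cos_sq y

theorem abs_sin_sub_sin_lt_of_one_sub_lt_cos_s2 {x y ε : ℝ} (hε : 0 ≤ ε)
    (h : 1 - ε ^ 2 / 2 < Real.cos (x - y)) :
    |Real.sin x - Real.sin y| < ε ∧ |Real.cos x - Real.cos y| < ε := by
  have hsq := sin_sub_sin_sq_add_cos_sub_cos_sq x y
  exact ⟨abs_lt_of_sq_lt_sq (by nlinarith [sq_nonneg (Real.cos x - Real.cos y)]) hε,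
    abs_lt_of_sq_lt_sq (by nlinarith [sq_nonneg (Real.sin x - Real.sin y)]) hε⟩

theorem Filter.Tendsto.inv_natCast_mul_of_inv_natCast_add_one_mul {s : ℕ → ℝ} {c : ℝ}
    (h : Tendsto (fun ℓ : ℕ => (((ℓ : ℝ) + 1) * s ℓ)⁻¹) atTop (𝓝 c)) :
    Tendsto (fun ℓ : ℕ => ((ℓ : ℝ) * s ℓ)⁻¹) atTop (𝓝 c) := by
  have hratio : Tendsto (fun ℓ : ℕ => 1 + (ℓ : ℝ)⁻¹) atTop (𝓝 1) := by
    simpa using tendsto_const_nhds.add (tendsto_inv_atTop_nhds_zero_nat (𝕜 := ℝ))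
  refine (one_mul c ▸ hratio.mul h).congr' ?_
  filter_upwards [eventually_ne_atTop 0] with ℓ hℓ
  have : (ℓ : ℝ) ≠ 0 := Nat.cast_ne_zero.mpr hℓ
  rw [mul_inv, mul_inv]
  field_simp

theorem tendsto_natCast_add_one_atTop : Tendsto (fun ℓ : ℕ => (ℓ : ℝ) + 1) atTop atTop :=
  tendsto_atTop_add_const_right _ 1 tendsto_natCast_atTop_atTop

theorem exists_seq_inv_natCast_add_one_mul_tendsto (c : ℝ) :
    ∃ κ > 0, ∃ s : ℕ → ℝ, (∀ ℓ : ℕ, κ / ((ℓ : ℝ) + 1) ≤ |s ℓ|) ∧ (∀ ℓ, |s ℓ| ≤ 1) ∧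
      Tendsto s atTop (𝓝 0) ∧ Tendsto (fun ℓ : ℕ => (((ℓ : ℝ) + 1) * s ℓ)⁻¹) atTop (𝓝 c) := by
  rcases eq_or_ne c 0 with rfl | hc
  · -- decays slower than `1 / ℓ`, so that `ℓ * s ℓ → ∞`
    have hs : Tendsto (fun ℓ : ℕ => (√((ℓ : ℝ) + 1))⁻¹) atTop (𝓝 0) :=
      tendsto_inv_atTop_zero.comp (Real.tendsto_sqrt_atTop.comp tendsto_natCast_add_one_atTop)
    have h1 (ℓ : ℕ) : (1 : ℝ) ≤ √((ℓ : ℝ) + 1) := Real.one_le_sqrt.mpr (by simp)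
    refine ⟨1, one_pos, fun ℓ => (√((ℓ : ℝ) + 1))⁻¹, fun ℓ => ?_, fun ℓ => ?_, hs, ?_⟩
    · rw [abs_of_pos (by positivity), one_div]
      exact inv_anti₀ (by positivity) (Real.sqrt_le_self_iff.mpr (Or.inr (by simp)))
    · rw [abs_of_pos (by positivity)]
      exact inv_le_one_of_one_le₀ (h1 ℓ)
    · simpa [← div_eq_mul_inv, Real.div_sqrt] using hs
  · have hc2 : 0 < c ^ 2 := by positivity
    refine ⟨|c| / (c ^ 2 + 1), by positivity, fun ℓ => c / (c ^ 2 * (ℓ + 1) + 1),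
      fun ℓ => ?_, fun ℓ => ?_, ?_, ?_⟩
    · have hℓ : (0 : ℝ) ≤ ℓ := ℓ.cast_nonneg
      rw [abs_div, abs_of_pos (a := c ^ 2 * (ℓ + 1) + 1) (by positivity), div_div,
        div_le_div_iff_of_pos_left (by positivity) (by positivity) (by positivity)]
      nlinarith
    · have hℓ : (0 : ℝ) ≤ ℓ := ℓ.cast_nonneg
      rw [abs_div, abs_of_pos (a := c ^ 2 * (ℓ + 1) + 1) (by positivity),
        div_le_one (by positivity)]
      nlinarith [sq_abs c, sq_nonneg (|c| - 1)]
    · exact tendsto_const_nhds.div_atTop (tendsto_atTop_add_const_right _ 1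
        (tendsto_natCast_add_one_atTop.const_mul_atTop hc2))
    · have h : Tendsto (fun ℓ : ℕ => c + c⁻¹ * ((ℓ : ℝ) + 1)⁻¹) atTop (𝓝 c) := by
        simpa using tendsto_const_nhds.add
          (tendsto_const_nhds.mul (tendsto_inv_atTop_zero.comp tendsto_natCast_add_one_atTop))
      refine h.congr fun ℓ => ?_
      field_simp

theorem exists_seq_angle_tendsto (c : ℝ) :
    ∃ κ > 0, ∃ φ : ℕ → ℝ, (∀ ℓ : ℕ, κ / ((ℓ : ℝ) + 1) ≤ |Real.sin (φ ℓ)|) ∧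
      Tendsto (fun ℓ => Real.cos (φ ℓ)) atTop (𝓝 1) ∧
      Tendsto (fun ℓ : ℕ => ((ℓ : ℝ) * Real.sin (φ ℓ))⁻¹) atTop (𝓝 c) := by
  obtain ⟨κ, hκ, s, hlow, hle, hs, hinv⟩ := exists_seq_inv_natCast_add_one_mul_tendsto c
  have hsin (ℓ : ℕ) : Real.sin (Real.arcsin (s ℓ)) = s ℓ :=
    Real.sin_arcsin (abs_le.mp (hle ℓ)).1 (abs_le.mp (hle ℓ)).2
  refine ⟨κ, hκ, fun ℓ => Real.arcsin (s ℓ), by simpa [hsin] using hlow, ?_,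
    by simpa [hsin] using hinv.inv_natCast_mul_of_inv_natCast_add_one_mul⟩
  simpa [Function.comp_def] using
    ((Real.continuous_cos.comp Real.continuous_arcsin).tendsto 0).comp hs

theorem Filter.Tendsto.inv_add_of_tendsto_zero {α 𝕜 : Type*} [NormedField 𝕜] {l : Filter α}
    {u v : α → 𝕜} {c : 𝕜} (hu : Tendsto (fun a => (u a)⁻¹) l (𝓝 c))
    (hv : Tendsto v l (𝓝 0)) (hne : ∀ᶠ a in l, u a ≠ 0) :
    Tendsto (fun a => (u a + v a)⁻¹) l (𝓝 c) := by
  have hratio : Tendsto (fun a => (1 + v a * (u a)⁻¹)⁻¹) l (𝓝 1) := by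
    simpa using ((tendsto_const_nhds (x := (1 : 𝕜))).add (hv.mul hu)).inv₀ (by simp)
  refine (mul_one c ▸ hu.mul hratio).congr' ?_
  filter_upwards [hne] with a ha
  rw [← mul_inv, mul_add, mul_one, mul_left_comm, mul_inv_cancel₀ ha, mul_one]

theorem tendsto_of_sin_cos_approx {x φ ε : ℕ → ℝ} {c : ℝ}
    (hsin : ∀ ℓ, |Real.sin (x ℓ) - Real.sin (φ ℓ)| < ε ℓ)
    (hcos : ∀ ℓ, |Real.cos (x ℓ) - Real.cos (φ ℓ)| < ε ℓ)
    (hεφ : ∀ ℓ, ε ℓ ≤ |Real.sin (φ ℓ)|) (hε : Tendsto (fun ℓ : ℕ => (ℓ : ℝ) * ε ℓ) atTop (𝓝 0))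
    (hφcos : Tendsto (fun ℓ => Real.cos (φ ℓ)) atTop (𝓝 1))
    (hφinv : Tendsto (fun ℓ : ℕ => ((ℓ : ℝ) * Real.sin (φ ℓ))⁻¹) atTop (𝓝 c)) :
    (∀ ℓ, Real.sin (x ℓ) ≠ 0) ∧ Tendsto (fun ℓ => Real.cos (x ℓ)) atTop (𝓝 1) ∧
      Tendsto (fun ℓ : ℕ => ((ℓ : ℝ) * Real.sin (x ℓ))⁻¹) atTop (𝓝 c) := by
  have hε₀ : Tendsto ε atTop (𝓝 0) := by
    refine (zero_mul (0 : ℝ) ▸ hε.mul (tendsto_inv_atTop_nhds_zero_nat (𝕜 := ℝ))).congr' ?_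
    filter_upwards [eventually_ne_atTop 0] with ℓ hℓ
    field_simp
  refine ⟨fun ℓ h => ?_, ?_, ?_⟩
  · have := hsin ℓ
    rw [h, zero_sub, abs_neg] at this
    exact (hεφ ℓ).not_gt this
  · have hdiff : Tendsto (fun ℓ => Real.cos (x ℓ) - Real.cos (φ ℓ)) atTop (𝓝 0) :=
      squeeze_zero_norm (fun ℓ => (hcos ℓ).le) hε₀
    simpa using hφcos.add hdiff
  · have hdiff : Tendsto (fun ℓ : ℕ => (ℓ : ℝ) * (Real.sin (x ℓ) - Real.sin (φ ℓ))) atTop (𝓝 0) :=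
      squeeze_zero_norm (fun ℓ => by
        rw [norm_mul, Real.norm_natCast, Real.norm_eq_abs]
        exact mul_le_mul_of_nonneg_left (hsin ℓ).le ℓ.cast_nonneg) hε
    have hne : ∀ᶠ ℓ : ℕ in atTop, (ℓ : ℝ) * Real.sin (φ ℓ) ≠ 0 := by
      filter_upwards [eventually_ne_atTop 0] with ℓ hℓ
      refine mul_ne_zero (Nat.cast_ne_zero.mpr hℓ) fun h => ?_
      have := (abs_nonneg _).trans_lt ((hsin ℓ).trans_le (hεφ ℓ))
      simp [h] at this
    simpa [← mul_add] using hφinv.inv_add_of_tendsto_zero hdiff hne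

theorem exists_seq_tendsto_inv_natCast_mul_sin {ι : Type*} [Fintype ι] {L : ι → ℝ}
    (hL : LinearIndependent ℚ L) (c : ι → ℝ) :
    ∃ t : ℕ → ℝ, (∀ ℓ : ℕ, (ℓ : ℝ) + 1 ≤ t ℓ) ∧ (∀ ℓ i, Real.sin (t ℓ * L i) ≠ 0) ∧
      (∀ i, Tendsto (fun ℓ => Real.cos (t ℓ * L i)) atTop (𝓝 1)) ∧
      (∀ i, Tendsto (fun ℓ : ℕ => ((ℓ : ℝ) * Real.sin (t ℓ * L i))⁻¹) atTop (𝓝 (c i))) := by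
  choose κ hκ φ hlow hcos hinv using fun i => exists_seq_angle_tendsto (c i)
  obtain ⟨⟨κ₀, hκ₀ : 0 < κ₀⟩, hκ₀le⟩ := Finite.exists_ge fun i => (⟨κ i, hκ i⟩ : Set.Ioi (0 : ℝ))
  set ε : ℕ → ℝ := fun ℓ => κ₀ / ((ℓ : ℝ) + 1) ^ 2
  have hεpos (ℓ : ℕ) : 0 < ε ℓ := div_pos hκ₀ (by positivity)
  have hδ (ℓ : ℕ) : 0 < ε ℓ ^ 2 / 2 := by have := hεpos ℓ; positivity
  choose t ht hclose using fun ℓ : ℕ =>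
    exists_forall_one_sub_lt_cos hL (fun i => φ i ℓ) (hδ ℓ) (ℓ + 1)
  have happrox (ℓ : ℕ) (i : ι) := abs_sin_sub_sin_lt_of_one_sub_lt_cos_s2 (hεpos ℓ).le (hclose ℓ i)
  have hεφ (i : ι) (ℓ : ℕ) : ε ℓ ≤ |Real.sin (φ i ℓ)| := by
    refine le_trans ?_ (hlow i ℓ)
    have h1 : (1 : ℝ) ≤ ℓ + 1 := by simp
    calc ε ℓ ≤ κ₀ / ((ℓ : ℝ) + 1) := div_le_div_of_nonneg_left hκ₀.le (by positivity) (by nlinarith)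
      _ ≤ κ i / ((ℓ : ℝ) + 1) := div_le_div_of_nonneg_right (hκ₀le i) (by positivity)
  have hε : Tendsto (fun ℓ : ℕ => (ℓ : ℝ) * ε ℓ) atTop (𝓝 0) := by
    refine squeeze_zero (fun ℓ => mul_nonneg ℓ.cast_nonneg (hεpos ℓ).le) (fun ℓ => ?_)
      ((tendsto_const_nhds (x := κ₀)).div_atTop tendsto_natCast_add_one_atTop)
    rw [mul_div_assoc', div_le_div_iff₀ (by positivity) (by positivity)]
    nlinarith
  have hedge (i : ι) := tendsto_of_sin_cos_approx (fun ℓ => (happrox ℓ i).1)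
    (fun ℓ => (happrox ℓ i).2) (hεφ i) hε (hcos i) (hinv i)
  exact ⟨t, ht, fun ℓ i => (hedge i).1 ℓ, fun i => (hedge i).2.1, fun i => (hedge i).2.2⟩

theorem one_div_natCast_mul_sqrt_sq_mul_alphaFn {t : ℝ} (ht : 0 < t) (ℓ : ℕ) (L : ℝ) :
    1 / ((ℓ : ℝ) * √(t ^ 2)) * alphaFn L (t ^ 2) =
      Real.cos (t * L) * ((ℓ : ℝ) * Real.sin (t * L))⁻¹ := by
  rw [alphaFn, if_pos (by positivity), Real.sqrt_sq ht.le]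
  field_simp

theorem one_div_natCast_mul_sqrt_sq_mul_betaFn {t : ℝ} (ht : 0 < t) (ℓ : ℕ) (L : ℝ) :
    1 / ((ℓ : ℝ) * √(t ^ 2)) * betaFn L (t ^ 2) = ((ℓ : ℝ) * Real.sin (t * L))⁻¹ := by
  rw [betaFn, if_pos (by positivity), Real.sqrt_sq ht.le]
  field_simp

theorem tendsto_one_div_mul_DtN {n : ℕ} (G : SimpleGraph (Fin n)) [DecidableRel G.Adj]
    (L : Fin n → Fin n → ℝ) (γ : Fin n → Fin n → EReal) {t : ℕ → ℝ} (ht : ∀ ℓ, 0 < t ℓ)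
    (hcos : ∀ k j, G.Adj k j → Tendsto (fun ℓ => Real.cos (t ℓ * L k j)) atTop (𝓝 1))
    (hinv : ∀ k j, G.Adj k j →
      Tendsto (fun ℓ : ℕ => ((ℓ : ℝ) * Real.sin (t ℓ * L k j))⁻¹) atTop (𝓝 ((γ k j).toReal)⁻¹))
    (k j : Fin n) :
    Tendsto (fun ℓ : ℕ => 1 / ((ℓ : ℝ) * √(t ℓ ^ 2)) * DtN G L (t ℓ ^ 2) k j) atTop
      (𝓝 (Qmat G γ k j)) := by
  unfold DtN Qmat
  split_ifs with hkj hkj'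
  · simp_rw [Finset.mul_sum, mul_ite, mul_zero, one_div_natCast_mul_sqrt_sq_mul_alphaFn (ht _)]
    refine tendsto_finsetSum _ fun l _ => ?_
    split_ifs with hkl
    · simpa using (hcos k l hkl).mul (hinv k l hkl)
    · exact tendsto_const_nhds
  · simp_rw [mul_neg, one_div_natCast_mul_sqrt_sq_mul_betaFn (ht _)]
    exact (hinv k j hkj').neg
  · simp

theorem Qmat_eq_lapMatrix {n : ℕ} (G : SimpleGraph (Fin n)) [DecidableRel G.Adj]
    {γ : Fin n → Fin n → EReal} (hγ : ∀ k j, G.Adj k j → γ k j = 1) :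
    Qmat G γ = G.lapMatrix ℝ := by
  have hentry (k j : Fin n) :
      (if G.Adj k j then ((γ k j).toReal)⁻¹ else 0) = if G.Adj k j then 1 else 0 := by
    split_ifs with h
    · simp [hγ k j h]
    · rfl
  ext k j
  rcases eq_or_ne k j with rfl | hkj
  · simp [Qmat, SimpleGraph.lapMatrix, SimpleGraph.degMatrix, hentry,
      SimpleGraph.degree_eq_sum_if_adj]
  · have := hentry k j
    simp only [Qmat, if_neg hkj, SimpleGraph.lapMatrix, SimpleGraph.degMatrix, Matrix.sub_apply,
      Matrix.diagonal_apply_ne _ hkj, SimpleGraph.adjMatrix_apply]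
    split_ifs at this ⊢ <;> simp_all

theorem dtn_rescaled_limit_general {n : ℕ}
    (G : SimpleGraph (Fin n)) [DecidableRel G.Adj]
    (L : Fin n → Fin n → ℝ) (hsymm : ∀ k j, L k j = L j k)
    (hindep : LinearIndependent ℚ
      (fun e : G.edgeSet => Sym2.lift ⟨L, hsymm⟩ (e : Sym2 (Fin n))))
    (γ : Fin n → Fin n → EReal) (hγsymm : ∀ k j, γ k j = γ j k) :
    (∃ lam : ℕ → ℝ, (∀ ℓ, 0 < lam ℓ) ∧ Tendsto lam atTop atTop ∧
      (∀ ℓ k j, G.Adj k j → Real.sin (Real.sqrt (lam ℓ) * L k j) ≠ 0) ∧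
      (∀ k j, Tendsto
        (fun ℓ : ℕ => (1 / ((ℓ : ℝ) * Real.sqrt (lam ℓ))) * DtN G L (lam ℓ) k j)
        atTop (nhds (Qmat G γ k j)))) ∧
    ((∀ k j, G.Adj k j → γ k j = 1) →
      ∀ k j, -(Qmat G γ k j) =
        (if G.Adj k j then (1 : ℝ) else 0) - (if k = j then (G.degree k : ℝ) else 0)) := by
  obtain ⟨t, ht, hsin, hcos, hinv⟩ := exists_seq_tendsto_inv_natCast_mul_sin hindep
    fun e : G.edgeSet => ((Sym2.lift ⟨γ, hγsymm⟩ (e : Sym2 (Fin n))).toReal)⁻¹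
  have ht₁ (ℓ : ℕ) : 1 ≤ t ℓ := le_trans (by simp) (ht ℓ)
  have htpos (ℓ : ℕ) : 0 < t ℓ := one_pos.trans_le (ht₁ ℓ)
  -- `Sym2.lift` computes on `s(k, j)`: there `hsin`, `hcos`, `hinv` are about `L k j` and `γ k j`
  refine ⟨⟨fun ℓ => t ℓ ^ 2, fun ℓ => pow_pos (htpos ℓ) 2, ?_, fun ℓ k j hkj => ?_,
    tendsto_one_div_mul_DtN G L γ htpos (fun k j hkj => hcos ⟨s(k, j), hkj⟩)
      (fun k j hkj => hinv ⟨s(k, j), hkj⟩)⟩, fun hγ k j => ?_⟩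
  · refine tendsto_atTop_mono (fun ℓ => (ht ℓ).trans ?_) tendsto_natCast_add_one_atTop
    nlinarith [ht₁ ℓ]
  · rw [Real.sqrt_sq (htpos ℓ).le]
    exact hsin ℓ ⟨s(k, j), hkj⟩
  · rw [Qmat_eq_lapMatrix G hγ]
    simp [SimpleGraph.lapMatrix, SimpleGraph.degMatrix, Matrix.diagonal_apply]

/-- If the edge lengths are linearly independent over `ℚ` and
`γ_{kj} ∈ [−∞,∞] \ {0}` are prescribed symmetric values on the edges, then there is a sequence
`λ_ℓ → ∞` of positive reals such that `sin(√λ_ℓ·L_{kj}) ≠ 0` on every edge (so `D_{λ_ℓ,V}` is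
defined) and `(1/(ℓ√λ_ℓ))·D_{λ_ℓ,V} → Q` entrywise.  Moreover, if `γ_{kj} = 1` on all edges,
then `−Q = A_G − D_G` is the graph Laplacian. -/
theorem dtn_rescaled_limit {n : ℕ} (hn : 2 ≤ n)
    (G : SimpleGraph (Fin n)) [DecidableRel G.Adj] (hconn : G.Connected)
    (L : Fin n → Fin n → ℝ) (hsymm : ∀ k j, L k j = L j k)
    (hLpos : ∀ k j, G.Adj k j → 0 < L k j)
    (hindep : LinearIndependent ℚ
      (fun e : G.edgeSet => Sym2.lift ⟨L, hsymm⟩ (e : Sym2 (Fin n))))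
    (γ : Fin n → Fin n → EReal) (hγsymm : ∀ k j, γ k j = γ j k)
    (hγne : ∀ k j, G.Adj k j → γ k j ≠ 0) :
    (∃ lam : ℕ → ℝ, (∀ ℓ, 0 < lam ℓ) ∧ Tendsto lam atTop atTop ∧
      (∀ ℓ k j, G.Adj k j → Real.sin (Real.sqrt (lam ℓ) * L k j) ≠ 0) ∧
      (∀ k j, Tendsto
        (fun ℓ : ℕ => (1 / ((ℓ : ℝ) * Real.sqrt (lam ℓ))) * DtN G L (lam ℓ) k j)
        atTop (nhds (Qmat G γ k j)))) ∧
    ((∀ k j, G.Adj k j → γ k j = 1) →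
      ∀ k j, -(Qmat G γ k j) =
        (if G.Adj k j then (1 : ℝ) else 0) - (if k = j then (G.degree k : ℝ) else 0)) :=
  dtn_rescaled_limit_general G L hsymm hindep γ hγsymm
end

section
/- Let G = (V,E) be a finite connected simple graph on the vertex set {1,…,n}, partitioned into V₀ = {1,…,m} (with 1 ≤ m < n) and V₁ = {m+1,…,n}. Let Q ∈ ℝ^{n×n} belong to the class A(G) and have the block form Q = [[A, Bᵀ],[B, C]] with A ∈ ℝ^{m×m} corresponding to V₀ and C ∈ ℝ^{(n−m)×(n−m)} corresponding to V₁. Assume that Q_{kj} > 0 for every edge (k,j) ∈ E with k ≠ j and that spb(C) < 0, and let M := A + Bᵀ(−C)⁻¹B be the Schur complement. Then for all distinct r,s ∈ V₀ one has M_{rs} = A_{rs} if and only if there is no path in G from r to s that has at least one intermediate vertex and all of whose intermediate vertices lie in V₁. -/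
/-!
Since `C` has nonnegative off-diagonal entries and spectrum in the open left half-plane, for
small `ε > 0` the matrix `1 + εC` is entrywise nonnegative with spectrum in the open unit disc, so
by Gelfand's formula the Neumann series converges and `(-C)⁻¹ = ε ∑ₖ (1 + εC)ᵏ`. Hence
`(-C)⁻¹ ≥ 0`, and `((-C)⁻¹)ᵢⱼ > 0` exactly when `j` is reachable from `i` inside `V₁`. The
correction `(Bᵀ(-C)⁻¹B)ᵣₛ = ∑ᵢⱼ Bᵢᵣ ((-C)⁻¹)ᵢⱼ Bⱼₛ` is a sum of nonnegative terms, so it vanishes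
iff there are no edges `r ~ i`, `j ~ s` with `j` reachable from `i` inside `V₁`, that is, no path
from `r` to `s` through `V₁`.
-/

open Matrix Filter Topology

theorem Relation.reflTransGen_ne_and_iff {α : Type*} {r : α → α → Prop} {a b : α} :
    ReflTransGen (fun x y => x ≠ y ∧ r x y) a b ↔ ReflTransGen r a b := by
  refine ⟨ReflTransGen.mono (fun _ _ h => h.2) _ _, ReflTransGen.lift' id (fun x y h => ?_) _ _⟩
  by_cases hxy : x = y
  · exact hxy ▸ .refl
  · exact .single ⟨hxy, h⟩

theorem HasSum.pos_iff_exists_pos {ι : Type*} {f : ι → ℝ} {a : ℝ} (h : HasSum f a)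
    (hf : ∀ i, 0 ≤ f i) : 0 < a ↔ ∃ i, 0 < f i := by
  refine ⟨fun ha => ?_, fun ⟨i, hi⟩ => hi.trans_le (le_hasSum h i fun j _ => hf j)⟩
  by_contra! hneg
  have : f = 0 := funext fun i => le_antisymm (hneg i) (hf i)
  exact ha.ne' (h.unique (this ▸ hasSum_zero))

theorem Complex.norm_one_add_mul_lt_one {z : ℂ} {ε : ℝ} (hε : 0 < ε)
    (hz : ε * ‖z‖ ^ 2 < -2 * z.re) : ‖1 + ε * z‖ < 1 := by
  have hsq : ‖1 + ε * z‖ ^ 2 = 1 + ε * (2 * z.re + ε * ‖z‖ ^ 2) := by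
    rw [Complex.sq_norm, Complex.sq_norm, Complex.normSq_apply, Complex.normSq_apply]
    simp only [Complex.add_re, Complex.one_re, Complex.mul_re, Complex.ofReal_re,
      Complex.ofReal_im, Complex.add_im, Complex.one_im, Complex.mul_im]
    ring
  have : ‖1 + ε * z‖ ^ 2 < 1 ^ 2 := by rw [hsq]; nlinarith
  exact lt_of_pow_lt_pow_left₀ 2 zero_le_one this

section BanachAlgebra

variable {A : Type*} [NormedRing A] [NormedAlgebra ℂ A] [CompleteSpace A]

theorem summable_pow_of_forall_spectrum_nnnorm_lt_one (x : A)
    (hx : ∀ z ∈ spectrum ℂ x, ‖z‖₊ < 1) : Summable (x ^ ·) := by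
  cases subsingleton_or_nontrivial A
  · exact summable_zero.congr fun _ => Subsingleton.elim _ _
  obtain ⟨c, hρc, hc1⟩ :=
    ENNReal.lt_iff_exists_nnreal_btwn.mp (spectrum.spectralRadius_lt_of_forall_lt x hx)
  have hbound : ∀ᶠ n : ℕ in atTop, ‖x ^ n‖ ≤ (c : ℝ) ^ n := by
    filter_upwards [(spectrum.gelfand_formula x).eventually_lt_const hρc,
      eventually_ge_atTop 1] with n hn hn1
    have hn0 : (0 : ℝ) < n := by exact_mod_cast hn1
    have := ENNReal.rpow_lt_rpow hn hn0
    rw [← ENNReal.rpow_mul, one_div_mul_cancel hn0.ne', ENNReal.rpow_one, ENNReal.rpow_natCast,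
      ← ENNReal.coe_pow, ENNReal.coe_lt_coe] at this
    exact_mod_cast this.le
  exact .of_norm_bounded_eventually_nat
    (summable_geometric_of_lt_one c.coe_nonneg (by exact_mod_cast hc1)) hbound

theorem eventually_forall_spectrum_one_add_smul_nnnorm_lt_one (x : A)
    (hx : ∀ z ∈ spectrum ℂ x, z.re < 0) :
    ∀ᶠ ε : ℝ in 𝓝[>] 0, ∀ w ∈ spectrum ℂ (1 + (ε : ℂ) • x), ‖w‖₊ < 1 := by
  obtain ⟨R, hR⟩ := (spectrum.isCompact x).exists_bound_of_continuousOn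
    (f := fun z : ℂ => ‖z‖ ^ 2 / -z.re) <| by
      refine ContinuousOn.div (by fun_prop) (by fun_prop) fun z hz => ?_
      linarith [hx z hz]
  have hR1 : 0 < |R| + 1 := by positivity
  filter_upwards [Ioo_mem_nhdsGT (div_pos two_pos hR1)] with ε ⟨hε, hεR⟩ w hw
  rw [← map_one (algebraMap ℂ A), ← Units.val_mk0 (Complex.ofReal_ne_zero.mpr hε.ne'),
    ← Units.smul_def, ← spectrum.singleton_add_eq, spectrum.unit_smul_eq_smul] at hw
  obtain ⟨_, rfl, _, ⟨z, hz, rfl⟩, rfl⟩ := hw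
  have hre := hx z hz
  have hbound : ‖z‖ ^ 2 ≤ (|R| + 1) * -z.re := by
    have := (le_abs_self _).trans ((hR z hz).trans (le_abs_self R))
    rw [div_le_iff₀ (by linarith)] at this
    nlinarith
  have := Complex.norm_one_add_mul_lt_one hε (z := z) <| by
    calc ε * ‖z‖ ^ 2 ≤ ε * ((|R| + 1) * -z.re) := by gcongr
      _ < 2 / (|R| + 1) * ((|R| + 1) * -z.re) := by
        gcongr; exact mul_pos hR1 (neg_pos.mpr hre)
      _ = -2 * z.re := by field_simp
  rw [← NNReal.coe_lt_coe]
  simpa [Units.smul_def] using this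

end BanachAlgebra

namespace Matrix

section Nonneg

variable {l m n o R : Type*} [Semiring R] [PartialOrder R] [IsStrictOrderedRing R]

theorem mul_apply_nonneg [Fintype m] {X : Matrix l m R} {Y : Matrix m o R}
    (hX : ∀ i k, 0 ≤ X i k) (hY : ∀ k j, 0 ≤ Y k j) (i : l) (j : o) : 0 ≤ (X * Y) i j :=
  Finset.sum_nonneg fun k _ => mul_nonneg (hX i k) (hY k j)

theorem mul_apply_pos_iff [Fintype m] {X : Matrix l m R} {Y : Matrix m o R}
    (hX : ∀ i k, 0 ≤ X i k) (hY : ∀ k j, 0 ≤ Y k j) (i : l) (j : o) :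
    0 < (X * Y) i j ↔ ∃ k, 0 < X i k ∧ 0 < Y k j := by
  rw [mul_apply, Finset.sum_pos_iff_of_nonneg fun k _ => mul_nonneg (hX i k) (hY k j)]
  simp only [Finset.mem_univ, true_and]
  refine exists_congr fun k => ⟨fun h => ⟨(hX i k).lt_of_ne ?_, (hY k j).lt_of_ne ?_⟩,
    fun h => mul_pos h.1 h.2⟩ <;> rintro h0 <;> simp [← h0] at h

theorem transpose_mul_mul_apply_eq_zero_iff [Fintype m] {B : Matrix m n R} {P : Matrix m m R}
    (hB : ∀ i r, 0 ≤ B i r) (hP : ∀ i j, 0 ≤ P i j) (r s : n) :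
    (Bᵀ * P * B) r s = 0 ↔ ¬ ∃ i j, 0 < B i r ∧ 0 < P i j ∧ 0 < B j s := by
  have hBt : ∀ r i, 0 ≤ Bᵀ r i := fun r i => hB i r
  have hBtP := mul_apply_nonneg hBt hP
  rw [← not_iff_not, not_not, ← ne_eq, ← (mul_apply_nonneg hBtP hB r s).lt_iff_ne',
    mul_apply_pos_iff hBtP hB]
  simp only [mul_apply_pos_iff hBt hP, transpose_apply]
  exact ⟨fun ⟨j, ⟨i, hi, hij⟩, hj⟩ => ⟨i, j, hi, hij, hj⟩,
    fun ⟨i, j, hi, hij, hj⟩ => ⟨j, ⟨i, hi, hij⟩, hj⟩⟩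

theorem exists_pow_apply_pos_iff [Fintype n] [DecidableEq n] {X : Matrix n n R}
    (hX : ∀ i j, 0 ≤ X i j) (i j : n) :
    (∃ k, 0 < (X ^ k) i j) ↔ Relation.ReflTransGen (fun a b => 0 < X a b) i j := by
  constructor
  · rintro ⟨k, hk⟩
    induction k generalizing j with
    | zero =>
      obtain rfl : i = j := by by_contra h; simp [h] at hk
      exact .refl
    | succ k ih =>
      rw [pow_succ, mul_apply_pos_iff (pow_apply_nonneg hX k) hX] at hk
      obtain ⟨b, hib, hbj⟩ := hk
      exact (ih b hib).tail hbj
  · intro h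
    induction h with
    | refl => exact ⟨0, by simp⟩
    | tail _ hbc ih =>
      obtain ⟨k, hk⟩ := ih
      refine ⟨k + 1, ?_⟩
      rw [pow_succ, mul_apply_pos_iff (pow_apply_nonneg hX k) hX]
      exact ⟨_, hk, hbc⟩

end Nonneg

variable {n : Type*} [Fintype n] [DecidableEq n]

theorem summable_pow_of_summable_pow_map_ofReal {X : Matrix n n ℝ}
    (h : Summable fun k => (X.map ((↑) : ℝ → ℂ)) ^ k) : Summable fun k => X ^ k := by
  convert h.map Complex.reAddGroupHom.mapMatrix (continuous_id.matrix_map Complex.continuous_re)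
    using 1 with k
  funext k
  rw [Function.comp_apply, show X.map ((↑) : ℝ → ℂ) = X.map Complex.ofRealHom from rfl,
    ← Matrix.map_pow]
  ext i j
  simp

section Metzler

variable {C : Matrix n n ℝ}

attribute [local instance] Matrix.linftyOpNormedRing Matrix.linftyOpNormedAlgebra in
theorem exists_hasSum_inv_neg (hC : ∀ i j, i ≠ j → 0 ≤ C i j)
    (hspec : ∀ z ∈ spectrum ℂ (C.map ((↑) : ℝ → ℂ)), z.re < 0) :
    ∃ ε : ℝ, 0 < ε ∧ (∀ i j, 0 ≤ (1 + ε • C) i j) ∧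
      HasSum (fun k => ε • (1 + ε • C) ^ k) (-C)⁻¹ := by
  have hdiag : ∀ᶠ ε : ℝ in 𝓝 0, ∀ i, 0 < 1 + ε * C i i :=
    eventually_all.2 fun i => (continuous_const.add (continuous_id.mul continuous_const)).tendsto'
      0 1 (by simp) |>.eventually (lt_mem_nhds one_pos)
  obtain ⟨ε, hε, hdiag, hspec⟩ := (eventually_mem_nhdsWithin.and
    ((hdiag.filter_mono nhdsWithin_le_nhds).and
      (eventually_forall_spectrum_one_add_smul_nnnorm_lt_one _ hspec))).exists
  set X := 1 + ε • C with hX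
  have hXc : X.map ((↑) : ℝ → ℂ) = 1 + (ε : ℂ) • C.map ((↑) : ℝ → ℂ) := by
    ext i j; by_cases h : i = j <;> simp [hX, h]
  have hsum : Summable fun k => X ^ k := summable_pow_of_summable_pow_map_ofReal
    (hXc ▸ summable_pow_of_forall_spectrum_nnnorm_lt_one _ hspec)
  have hinv : -C * (ε • ∑' k, X ^ k) = 1 := by
    have : -C * ε • (∑' k, X ^ k) = (1 - X) * ∑' k, X ^ k := by
      rw [hX, mul_smul_comm, ← smul_mul_assoc]; congr 1; simp
    rw [this, hsum.one_sub_mul_tsum_pow]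
  refine ⟨ε, hε, fun i j => ?_, ?_⟩
  · by_cases h : i = j
    · subst h; simpa [hX] using (hdiag i).le
    · simpa [hX, h] using mul_nonneg hε.le (hC i j h)
  · rw [inv_eq_right_inv hinv]
    exact hsum.hasSum.const_smul ε

theorem inv_neg_apply_nonneg (hC : ∀ i j, i ≠ j → 0 ≤ C i j)
    (hspec : ∀ z ∈ spectrum ℂ (C.map ((↑) : ℝ → ℂ)), z.re < 0) (i j : n) : 0 ≤ (-C)⁻¹ i j := by
  obtain ⟨ε, hε, hX, hsum⟩ := exists_hasSum_inv_neg hC hspec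
  exact (Pi.hasSum.1 (Pi.hasSum.1 hsum i) j).nonneg fun k =>
    mul_nonneg hε.le (pow_apply_nonneg hX k i j)

theorem inv_neg_apply_pos_iff (hC : ∀ i j, i ≠ j → 0 ≤ C i j)
    (hspec : ∀ z ∈ spectrum ℂ (C.map ((↑) : ℝ → ℂ)), z.re < 0) (i j : n) :
    0 < (-C)⁻¹ i j ↔ Relation.ReflTransGen (fun a b => a ≠ b ∧ 0 < C a b) i j := by
  obtain ⟨ε, hε, hX, hsum⟩ := exists_hasSum_inv_neg hC hspec
  have hoff : ∀ a b, a ≠ b → (0 < (1 + ε • C) a b ↔ 0 < C a b) := fun a b hab => by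
    simp [hab, mul_pos_iff_of_pos_left hε]
  rw [(Pi.hasSum.1 (Pi.hasSum.1 hsum i) j).pos_iff_exists_pos fun k =>
      mul_nonneg hε.le (pow_apply_nonneg hX k i j)]
  simp only [Matrix.smul_apply, smul_eq_mul, mul_pos_iff_of_pos_left hε]
  rw [exists_pow_apply_pos_iff hX, ← Relation.reflTransGen_ne_and_iff]
  congr! 3 with a b
  exact and_congr_right (hoff a b)

end Metzler

section SignPattern

variable {V : Type*} {G : SimpleGraph V} {Q : Matrix V V ℝ}

theorem apply_nonneg_of_ne (hQ : ∀ k j, k ≠ j → ¬ G.Adj k j → Q k j = 0)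
    (hpos : ∀ k j, G.Adj k j → 0 < Q k j) {k j : V} (hkj : k ≠ j) : 0 ≤ Q k j := by
  by_cases h : G.Adj k j
  · exact (hpos k j h).le
  · exact (hQ k j hkj h).ge

theorem apply_pos_iff_adj_of_ne (hQ : ∀ k j, k ≠ j → ¬ G.Adj k j → Q k j = 0)
    (hpos : ∀ k j, G.Adj k j → 0 < Q k j) {k j : V} (hkj : k ≠ j) : 0 < Q k j ↔ G.Adj k j :=
  ⟨fun h => by_contra fun hadj => h.ne' (hQ k j hkj hadj), hpos k j⟩

end SignPattern

end Matrix

namespace SimpleGraph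

theorem Walk.reachable_comap {V W : Type*} {G : SimpleGraph W} {f : V → W} {u v : W}
    (hf : Function.Injective f) (w : G.Walk u v) (hw : ∀ x ∈ w.support, ∃ c, x = f c)
    {a b : V} (hu : u = f a) (hv : v = f b) : (G.comap f).Reachable a b := by
  induction w generalizing a with
  | nil => exact hf (hu.symm.trans hv) ▸ .refl _
  | cons h w ih =>
    obtain ⟨c, hc⟩ := hw _ (List.mem_cons_of_mem _ w.start_mem_support)
    refine Adj.reachable (G := G.comap f) ?_ |>.trans
      (ih (fun x hx => hw x (List.mem_cons_of_mem _ hx)) hc hv)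
    simpa [← hu, ← hc] using h

variable {α β : Type*} {G : SimpleGraph (α ⊕ β)} {a b : α}

theorem exists_adj_reachable_comap_inr_of_isPath (hab : a ≠ b)
    (w : G.Walk (.inl a) (.inl b)) (hw : w.IsPath) (hlen : 2 ≤ w.length)
    (hsupp : ∀ v ∈ w.support, v ≠ .inl a → v ≠ .inl b → ∃ i, v = .inr i) :
    ∃ i j, G.Adj (.inl a) (.inr i) ∧ (G.comap Sum.inr).Reachable i j ∧
      G.Adj (.inr j) (.inl b) := by
  obtain ⟨v, h₁, w₁, rfl⟩ := w.exists_eq_cons_of_ne (by simpa using hab)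
  obtain ⟨hw₁, ha⟩ := Walk.cons_isPath_iff _ _ |>.mp hw
  have hvb : v ≠ .inl b := by
    rintro rfl
    simp [(Walk.isPath_iff_nil.mp hw₁).length_eq_zero] at hlen
  obtain ⟨u, h₂, w₂, hrev⟩ := w₁.reverse.exists_eq_cons_of_ne hvb.symm
  obtain ⟨hw₂, hb⟩ := Walk.cons_isPath_iff _ _ |>.mp (hrev ▸ hw₁.reverse)
  have hinr : ∀ x ∈ w₂.support, ∃ i, x = .inr i := by
    intro x hx
    have hx₁ : x ∈ w₁.reverse.support := by rw [hrev]; exact List.mem_cons_of_mem _ hx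
    rw [Walk.support_reverse, List.mem_reverse] at hx₁
    exact hsupp x (List.mem_cons_of_mem _ hx₁) (by rintro rfl; exact ha hx₁)
      (by rintro rfl; exact hb hx)
  obtain ⟨j, rfl⟩ := hinr u w₂.start_mem_support
  obtain ⟨i, rfl⟩ := hinr _ w₂.end_mem_support
  exact ⟨i, j, h₁, (w₂.reachable_comap Sum.inr_injective hinr rfl rfl).symm, h₂.symm⟩

theorem exists_isPath_of_adj_reachable_comap_inr (hab : a ≠ b) {i j : β}
    (h₁ : G.Adj (.inl a) (.inr i)) (hij : (G.comap Sum.inr).Reachable i j)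
    (h₂ : G.Adj (.inr j) (.inl b)) :
    ∃ w : G.Walk (.inl a) (.inl b), w.IsPath ∧ 2 ≤ w.length ∧
      ∀ v ∈ w.support, v ≠ .inl a → v ≠ .inl b → ∃ i, v = .inr i := by
  obtain ⟨w, hw⟩ := hij.exists_isPath
  obtain ⟨w', hw', hinr⟩ : ∃ w' : G.Walk (.inr i) (.inr j), w'.IsPath ∧
      ∀ x ∈ w'.support, ∃ c, x = .inr c := by
    refine ⟨w.map (Hom.comap Sum.inr G), hw.map Sum.inr_injective, fun x hx => ?_⟩
    erw [Walk.support_map, List.mem_map] at hx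
    obtain ⟨c, -, rfl⟩ := hx
    exact ⟨c, rfl⟩
  have hinl : ∀ c, Sum.inl c ∉ w'.support := fun c hc => by simpa using hinr _ hc
  refine ⟨.cons h₁ (w'.concat h₂), ?_, by simp, ?_⟩
  · refine (Walk.cons_isPath_iff _ _).mpr ⟨hw'.concat (hinl b) h₂, ?_⟩
    simpa [Walk.support_concat, hab] using hinl a
  · intro v hv hva hvb
    rw [Walk.support_cons, Walk.support_concat, List.mem_cons, List.mem_append,
      List.mem_singleton] at hv
    rcases hv with rfl | hv | rfl
    exacts [absurd rfl hva, hinr v hv, absurd rfl hvb]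

theorem exists_isPath_inl_inl_iff (hab : a ≠ b) :
    (∃ w : G.Walk (.inl a) (.inl b), w.IsPath ∧ 2 ≤ w.length ∧
        ∀ v ∈ w.support, v ≠ .inl a → v ≠ .inl b → ∃ i, v = .inr i) ↔
      ∃ i j, G.Adj (.inl a) (.inr i) ∧ (G.comap Sum.inr).Reachable i j ∧
        G.Adj (.inr j) (.inl b) :=
  ⟨fun ⟨w, hw, hlen, hsupp⟩ => exists_adj_reachable_comap_inr_of_isPath hab w hw hlen hsupp,
    fun ⟨_, _, h₁, hij, h₂⟩ => exists_isPath_of_adj_reachable_comap_inr hab h₁ hij h₂⟩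

end SimpleGraph

theorem schur_complement_entry_eq_iff_general {m p : ℕ}
    (G : SimpleGraph (Fin m ⊕ Fin p))
    (Q : Matrix (Fin m ⊕ Fin p) (Fin m ⊕ Fin p) ℝ)
    (hQ : ∀ k j, k ≠ j → ¬ G.Adj k j → Q k j = 0)
    (hpos : ∀ k j, G.Adj k j → 0 < Q k j)
    (hspb : ∀ z ∈ spectrum ℂ ((Q.toBlocks₂₂).map Complex.ofReal), z.re < 0) :
    ∀ r s : Fin m, r ≠ s →
      ((Q.toBlocks₁₁ + (Q.toBlocks₂₁)ᵀ * (-Q.toBlocks₂₂)⁻¹ * Q.toBlocks₂₁) r s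
          = Q.toBlocks₁₁ r s ↔
        ¬ ∃ w : G.Walk (Sum.inl r) (Sum.inl s), w.IsPath ∧ 2 ≤ w.length ∧
            ∀ v ∈ w.support, v ≠ Sum.inl r → v ≠ Sum.inl s → ∃ i : Fin p, v = Sum.inr i) := by
  intro r s hrs
  have hC : ∀ i j, i ≠ j → 0 ≤ Q.toBlocks₂₂ i j := fun i j hij =>
    apply_nonneg_of_ne hQ hpos (Sum.inr_injective.ne hij)
  have hB : ∀ i j, 0 ≤ Q.toBlocks₂₁ i j := fun i j => apply_nonneg_of_ne hQ hpos Sum.inr_ne_inl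
  have hBpos : ∀ i j, 0 < Q.toBlocks₂₁ i j ↔ G.Adj (.inl j) (.inr i) := fun i j =>
    (apply_pos_iff_adj_of_ne hQ hpos Sum.inr_ne_inl).trans (G.adj_comm _ _)
  have hreach : ∀ i j, 0 < (-Q.toBlocks₂₂)⁻¹ i j ↔ (G.comap Sum.inr).Reachable i j := by
    intro i j
    rw [inv_neg_apply_pos_iff hC hspb, SimpleGraph.reachable_iff_reflTransGen]
    congr! 3 with a b
    exact ⟨fun h => (apply_pos_iff_adj_of_ne hQ hpos (Sum.inr_injective.ne h.1)).1 h.2,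
      fun h => ⟨(G.comap Sum.inr).ne_of_adj h, hpos _ _ h⟩⟩
  rw [Matrix.add_apply, add_eq_left,
    transpose_mul_mul_apply_eq_zero_iff hB (inv_neg_apply_nonneg hC hspb),
    SimpleGraph.exists_isPath_inl_inl_iff hrs]
  simp only [hBpos, hreach, G.adj_comm (.inr _) (.inl s)]

/-- Let `G` be a finite connected simple graph on `V₀ ⊕ V₁`, and let
`Q ∈ ℝ^{n×n}` be in the class `A(G)` with block form `[[A, Bᵀ],[B, C]]`, `Q_{kj} > 0` on all
edges and `spb(C) < 0`.  With `M = A + Bᵀ(−C)⁻¹B` the Schur complement, for all distinct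
`r, s ∈ V₀` one has `M_{rs} = A_{rs}` if and only if there is no path in `G` from `r` to `s`
with at least one intermediate vertex, all of whose intermediate vertices lie in `V₁`. -/
theorem schur_complement_entry_eq_iff {m p : ℕ} (hm : 1 ≤ m) (hp : 1 ≤ p)
    (G : SimpleGraph (Fin m ⊕ Fin p)) (hconn : G.Connected)
    (Q : Matrix (Fin m ⊕ Fin p) (Fin m ⊕ Fin p) ℝ)
    (hQ : ∀ k j, k ≠ j → ¬ G.Adj k j → Q k j = 0)
    (hsym : Q.toBlocks₁₂ = (Q.toBlocks₂₁)ᵀ)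
    (hpos : ∀ k j, G.Adj k j → 0 < Q k j)
    (hspb : ∀ z ∈ spectrum ℂ ((Q.toBlocks₂₂).map Complex.ofReal), z.re < 0) :
    ∀ r s : Fin m, r ≠ s →
      ((Q.toBlocks₁₁ + (Q.toBlocks₂₁)ᵀ * (-Q.toBlocks₂₂)⁻¹ * Q.toBlocks₂₁) r s
          = Q.toBlocks₁₁ r s ↔
        ¬ ∃ w : G.Walk (Sum.inl r) (Sum.inl s), w.IsPath ∧ 2 ≤ w.length ∧
            ∀ v ∈ w.support, v ≠ Sum.inl r → v ≠ Sum.inl s → ∃ i : Fin p, v = Sum.inr i) :=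
  schur_complement_entry_eq_iff_general G Q hQ hpos hspb
end

section
/- Let G be a finite connected simple graph with vertex set V = {v_1,…,v_n} (n ≥ 2) and commensurable edge lengths, i.e. L_{kj} = n_{kj}·L₀ for positive integers n_{kj} and some L₀ > 0. Then for every μ with 0 < μ < min_{(k,j)∈E} (π/L_{kj})² and every nonnegative integer p, setting λ = (√μ + 2πp/L₀)², the matrix D_{λ,V} is defined (sin(√λ·L_{kj}) ≠ 0 for every edge) and the semigroup (e^{−t·D_{λ,V}})_{t≥0} is strongly positive. -/
open Matrix

/-!
Write `D = D_{λ,V}`. Since `√λ · L_{kj} = √μ · L_{kj} + 2π p n_{kj}`, the sines at `λ`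
coincide with those at `μ`, which are positive because `0 < √μ · L_{kj} < π`. Hence every
`β_{kj}(λ)` is positive, so `-t D` has nonnegative off-diagonal entries that are positive
exactly on the edges. Adding a multiple of the identity makes all entries nonnegative and only
rescales the exponential; the exponential series of a nonnegative matrix has a term `A^k / k!`
that is positive at `(i, j)` as soon as a walk of length `k` joins `i` to `j`, and
connectedness provides one.
-/

namespace Matrix

open NormedSpace

variable {ι : Type*} [Fintype ι] [DecidableEq ι] {A : Matrix ι ι ℝ}

theorem pow_apply_pos_of_walk {G : SimpleGraph ι} (hA : ∀ i j, 0 ≤ A i j)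
    (hG : ∀ i j, G.Adj i j → 0 < A i j) {i j : ι} (w : G.Walk i j) :
    0 < (A ^ w.length) i j := by
  induction w with
  | nil => simp
  | @cons u v _ huv _ ih =>
    rw [SimpleGraph.Walk.length_cons, pow_succ', mul_apply]
    exact Finset.sum_pos' (fun l _ => mul_nonneg (hA u l) (pow_apply_nonneg hA _ l _))
      ⟨v, Finset.mem_univ v, mul_pos (hG u v huv) ih⟩

theorem hasSum_exp_apply (A : Matrix ι ι ℝ) (i j : ι) :
    HasSum (fun k : ℕ => (A ^ k) i j / k.factorial) (exp A i j) := by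
  have hA : HasSum (fun k : ℕ => (k.factorial⁻¹ : ℝ) • A ^ k) (exp A) :=
    open scoped Norms.Operator in exp_series_hasSum_exp' A
  simpa [div_eq_inv_mul] using Pi.hasSum.mp (Pi.hasSum.mp hA i) j

theorem exp_apply_pos_of_nonneg {G : SimpleGraph ι} (hG : G.Preconnected)
    (hA : ∀ i j, 0 ≤ A i j) (hadj : ∀ i j, G.Adj i j → 0 < A i j) (i j : ι) :
    0 < exp A i j := by
  obtain ⟨w⟩ := hG i j
  refine hasSum_lt (f := 0) (i := w.length) (fun k => ?_) ?_ hasSum_zero (hasSum_exp_apply A i j)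
  · exact div_nonneg (pow_apply_nonneg hA k i j) (by positivity)
  · exact div_pos (pow_apply_pos_of_walk hA hadj w) (by positivity)

theorem exp_add_smul_one (A : Matrix ι ι ℝ) (c : ℝ) :
    exp (A + c • 1) = Real.exp c • exp A := by
  rw [exp_add_of_commute _ _ ((Commute.one_right A).smul_right c), smul_one_eq_diagonal,
    exp_diagonal]
  ext i j
  simp [mul_diagonal, Real.exp_eq_exp_ℝ, mul_comm]

theorem exp_apply_pos_of_offDiag_nonneg {G : SimpleGraph ι} (hG : G.Preconnected)
    (hA : ∀ i j, i ≠ j → 0 ≤ A i j) (hadj : ∀ i j, G.Adj i j → 0 < A i j) (i j : ι) :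
    0 < exp A i j := by
  set c := ∑ l, |A l l|
  have hshift : ∀ i j, 0 ≤ (A + c • 1) i j := by
    intro i j
    rcases eq_or_ne i j with rfl | hij
    · have hc : |A i i| ≤ c :=
        Finset.single_le_sum (f := fun l => |A l l|) (fun l _ => abs_nonneg _) (Finset.mem_univ i)
      simp only [add_apply, smul_apply, one_apply_eq, smul_eq_mul, mul_one]
      linarith [neg_abs_le (A i i)]
    · simpa [one_apply_ne hij] using hA i j hij
  have hpos := exp_apply_pos_of_nonneg hG hshift
    (fun i j h => by simpa [one_apply_ne h.ne] using hadj i j h) i j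
  rw [exp_add_smul_one, smul_apply, smul_eq_mul] at hpos
  exact pos_of_mul_pos_right hpos (Real.exp_pos c).le

end Matrix

open Real

theorem betaFn_pos {L lam : ℝ} (hlam : 0 < lam) (hsin : 0 < sin (√lam * L)) :
    0 < betaFn L lam := by
  rw [betaFn, if_pos hlam]
  exact div_pos (sqrt_pos.mpr hlam) hsin

theorem DtN_apply_of_ne {V : Type*} [Fintype V] [DecidableEq V] (G : SimpleGraph V)
    [DecidableRel G.Adj] (L : V → V → ℝ) (lam : ℝ) {k j : V} (hkj : k ≠ j) :
    DtN G L lam k j = if G.Adj k j then -betaFn (L k j) lam else 0 :=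
  if_neg hkj

theorem exp_smul_neg_DtN_apply_pos {V : Type*} [Fintype V] [DecidableEq V] {G : SimpleGraph V}
    [DecidableRel G.Adj] (hG : G.Preconnected) {L : V → V → ℝ} {lam : ℝ}
    (hβ : ∀ k j, G.Adj k j → 0 < betaFn (L k j) lam) {t : ℝ} (ht : 0 < t) (i j : V) :
    0 < NormedSpace.exp (t • -DtN G L lam) i j := by
  refine Matrix.exp_apply_pos_of_offDiag_nonneg hG (fun k j hkj => ?_) (fun k j hkj => ?_) i j
  · rw [Matrix.smul_apply, neg_apply, DtN_apply_of_ne G L lam hkj, smul_eq_mul]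
    split_ifs with hadj
    · exact mul_nonneg ht.le (by simpa using (hβ k j hadj).le)
    · simp
  · rw [Matrix.smul_apply, neg_apply, DtN_apply_of_ne G L lam hkj.ne, if_pos hkj, neg_neg,
      smul_eq_mul]
    exact mul_pos ht (hβ k j hkj)

theorem Real.sin_add_two_pi_mul_div_mul (x : ℝ) (p m : ℕ) {L₀ : ℝ} (hL₀ : L₀ ≠ 0) :
    sin ((x + 2 * π * p / L₀) * (m * L₀)) = sin (x * (m * L₀)) := by
  have : (x + 2 * π * p / L₀) * (m * L₀) = x * (m * L₀) + (p * m : ℕ) * (2 * π) := by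
    push_cast
    field_simp
  rw [this, sin_add_nat_mul_two_pi]

theorem Real.sin_sqrt_mul_pos {μ L : ℝ} (hμ : 0 < μ) (hL : 0 < L) (hμL : μ < (π / L) ^ 2) :
    0 < sin (√μ * L) := by
  have hlt : √μ < π / L := (sqrt_lt' (by positivity)).mpr hμL
  exact sin_pos_of_pos_of_lt_pi (by positivity) ((lt_div_iff₀ hL).mp hlt)

theorem dtn_commensurable_strongly_positive_general {n : ℕ}
    (G : SimpleGraph (Fin n)) [DecidableRel G.Adj] (hconn : G.Connected)
    (L : Fin n → Fin n → ℝ) (hLpos : ∀ k j, G.Adj k j → 0 < L k j)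
    (L₀ : ℝ) (hL₀ : 0 < L₀) (nkj : Fin n → Fin n → ℕ)
    (hcomm : ∀ k j, G.Adj k j → 0 < nkj k j ∧ L k j = (nkj k j : ℝ) * L₀)
    (μ : ℝ) (hμ : 0 < μ) (hμlt : ∀ k j, G.Adj k j → μ < (Real.pi / L k j) ^ 2)
    (p : ℕ) (lam : ℝ) (hlam : lam = (Real.sqrt μ + 2 * Real.pi * p / L₀) ^ 2) :
    (∀ k j, G.Adj k j → Real.sin (Real.sqrt lam * L k j) ≠ 0) ∧
      ∀ t : ℝ, 0 < t → ∀ i j, 0 < NormedSpace.exp (t • (-(DtN G L lam))) i j := by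
  have hlam_pos : 0 < lam := by rw [hlam]; positivity
  have hsqrt : √lam = √μ + 2 * π * p / L₀ := by rw [hlam, sqrt_sq (by positivity)]
  have hsin : ∀ k j, G.Adj k j → 0 < sin (√lam * L k j) := by
    intro k j hkj
    obtain ⟨-, hL⟩ := hcomm k j hkj
    rw [hsqrt, hL, sin_add_two_pi_mul_div_mul _ _ _ hL₀.ne', ← hL]
    exact sin_sqrt_mul_pos hμ (hLpos k j hkj) (hμlt k j hkj)
  refine ⟨fun k j hkj => (hsin k j hkj).ne', fun t ht => ?_⟩
  exact exp_smul_neg_DtN_apply_pos hconn.preconnected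
    (fun k j hkj => betaFn_pos hlam_pos (hsin k j hkj)) ht

/-- Let `G` be a finite connected quantum graph with commensurable edge
lengths `L_{kj} = n_{kj}·L₀`.  Then for every `μ` with `0 < μ < min_{(k,j)∈E} (π/L_{kj})²` and
every `p ∈ ℕ`, setting `λ = (√μ + 2πp/L₀)²`, the matrix `D_{λ,V}` is defined
(`sin(√λ·L_{kj}) ≠ 0` on every edge) and the semigroup `(e^{−tD_{λ,V}})_{t≥0}` is strongly
positive. -/
theorem dtn_commensurable_strongly_positive {n : ℕ} (hn : 2 ≤ n)
    (G : SimpleGraph (Fin n)) [DecidableRel G.Adj] (hconn : G.Connected)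
    (L : Fin n → Fin n → ℝ) (hsymm : ∀ k j, L k j = L j k)
    (hLpos : ∀ k j, G.Adj k j → 0 < L k j)
    (L₀ : ℝ) (hL₀ : 0 < L₀) (nkj : Fin n → Fin n → ℕ)
    (hcomm : ∀ k j, G.Adj k j → 0 < nkj k j ∧ L k j = (nkj k j : ℝ) * L₀)
    (μ : ℝ) (hμ : 0 < μ) (hμlt : ∀ k j, G.Adj k j → μ < (Real.pi / L k j) ^ 2)
    (p : ℕ) (lam : ℝ) (hlam : lam = (Real.sqrt μ + 2 * Real.pi * p / L₀) ^ 2) :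
    (∀ k j, G.Adj k j → Real.sin (Real.sqrt lam * L k j) ≠ 0) ∧
      ∀ t : ℝ, 0 < t → ∀ i j, 0 < NormedSpace.exp (t • (-(DtN G L lam))) i j :=
  dtn_commensurable_strongly_positive_general G hconn L hLpos L₀ hL₀ nkj hcomm μ hμ hμlt p lam hlam
end
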